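/- arXiv:1712.08286 — 5 statements merged into one kernel-verified Lean document; each statement's English description precedes it below -/
import Mathlib

section
/- For every n ≥ 2, there exist continuous functions ψ^{pq} : [0,1] → [0,1] (for p ∈ {1,…,n}, q ∈ {0,…,2n}), independent of any target function, such that for every continuous function f : [0,1]^n → ℝ there exist continuous functions χ^q : ℝ → ℝ (for q ∈ {0,…,2n}) with f(x_1,…,x_n) = Σ_{q=0}^{2n} χ^q( Σ_{p=1}^n ψ^{pq}(x_p) ) for all (x_1,…,x_n) ∈ [0,1]^n. -/
/-
A point of `[0, 1]` lies in the gaps of at most one of `N = 2n + 1` families of grid intervals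
(intervals of length `(N - 1) h` separated by gaps of length `h`, consecutive families shifted
by `h`), so every point of `[0, 1]ⁿ` lies in a grid cube of at least `n + 1` families. The inner
functions are uniform limits of functions that are constant on the grid intervals of finer and
finer grids, the constants being perturbed so that `∑ p, ψ p q (x p)` sends distinct cubes of
family `q` to well separated values; each later correction is too small to spoil this.
Given `|f| ≤ b`, a bump of height `f(cube) / (n + 1)` around each of these values gives outer
functions with `|χ q| ≤ b / (n + 1)` and
`|f - ∑ q, χ q (∑ p, ψ p q (x p))| ≤ (2n + 1) b / (2n + 2)`: the `n + 1` good families each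
contribute `f / (n + 1)` up to the oscillation of `f` on a cube, and the at most `n` others at
most `b / (n + 1)` each. Iterating on the remainder, the outer functions form geometric series
whose sums represent `f` exactly.
-/

open Set Filter Topology Metric Finset

namespace Kolmogorov

noncomputable section

theorem exists_seq_of_forall_exists {α : Type*} {P : ℕ → α → Prop} {R : ℕ → α → α → Prop}
    {a₀ : α} (h₀ : P 0 a₀) (step : ∀ k a, P k a → ∃ b, P (k + 1) b ∧ R k a b) :
    ∃ f : ℕ → α, f 0 = a₀ ∧ ∀ k, P k (f k) ∧ R k (f k) (f (k + 1)) := by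
  choose! next hnext using step
  let f : ℕ → α := fun k => Nat.rec a₀ next k
  have hP : ∀ k, P k (f k) := fun k => by
    induction k with
    | zero => exact h₀
    | succ k ih => exact (hnext k _ ih).1
  exact ⟨f, rfl, fun k => ⟨hP k, (hnext k _ (hP k)).2⟩⟩

theorem le_div_two_pow_of_halving {β : ℕ → ℝ} (hβ : ∀ k, β (k + 1) ≤ β k / 2) (k m : ℕ) :
    β (k + m) ≤ β k / 2 ^ m := by
  induction m with
  | zero => simp
  | succ m ih =>
    calc β (k + (m + 1)) ≤ β (k + m) / 2 := hβ (k + m)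
      _ ≤ β k / 2 ^ m / 2 := by gcongr
      _ = β k / 2 ^ (m + 1) := by rw [pow_succ, div_div]

theorem exists_tendstoUniformlyOn_of_abs_sub_le_halving {α : Type*} {s : Set α}
    {u : ℕ → α → ℝ} {β : ℕ → ℝ} (hu : ∀ k, ∀ x ∈ s, |u (k + 1) x - u k x| ≤ β k)
    (hβ : ∀ k, β (k + 1) ≤ β k / 2) :
    ∃ v : α → ℝ, TendstoUniformlyOn u v atTop s ∧ ∀ k, ∀ x ∈ s, |u k x - v x| ≤ 2 * β k := by
  have hgeom : ∀ x ∈ s, ∀ k m, dist (u (k + m) x) (u (k + m + 1) x) ≤ 2 * β k / 2 / 2 ^ m := by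
    intro x hx k m
    rw [dist_comm, Real.dist_eq, mul_div_cancel_left₀ _ two_ne_zero]
    exact (hu _ x hx).trans (le_div_two_pow_of_halving hβ k m)
  have hlim : ∀ x ∈ s, Tendsto (u · x) atTop (𝓝 (limUnder atTop (u · x))) := by
    intro x hx
    have hcauchy : CauchySeq (u · x) :=
      cauchySeq_of_le_geometric_two (C := 2 * β 0) (by simpa only [zero_add] using hgeom x hx 0)
    exact hcauchy.tendsto_limUnder
  have hbound : ∀ k, ∀ x ∈ s, |u k x - limUnder atTop (u · x)| ≤ 2 * β k := fun k x hx => by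
    simpa [Real.dist_eq] using dist_le_of_le_geometric_two_of_tendsto₀ (hgeom x hx k)
      (by simpa only [add_comm k] using (tendsto_add_atTop_iff_nat k).2 (hlim x hx))
  refine ⟨fun x => limUnder atTop (u · x), Metric.tendstoUniformlyOn_iff.2 fun ε hε => ?_, hbound⟩
  have hsmall : Tendsto (fun k : ℕ => 2 * β 0 * (1 / 2) ^ k) atTop (𝓝 0) := by
    simpa using (tendsto_pow_atTop_nhds_zero_of_lt_one (by norm_num) one_half_lt_one).const_mul
      (2 * β 0)
  filter_upwards [hsmall.eventually (gt_mem_nhds hε)] with k hk x hx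
  rw [dist_comm, Real.dist_eq]
  calc |u k x - limUnder atTop (u · x)| ≤ 2 * β k := hbound k x hx
    _ ≤ 2 * β 0 * (1 / 2) ^ k := by
      rw [one_div, inv_pow, mul_assoc, ← div_eq_mul_inv]
      simpa using le_div_two_pow_of_halving hβ 0 k
    _ < ε := hk

theorem exists_pos_forall_dist_le_of_continuousOn {ι X Y : Type*} [Fintype ι]
    [PseudoMetricSpace X] [PseudoMetricSpace Y] {s : Set X} (hs : IsCompact s)
    {f : ι → X → Y} (hf : ∀ i, ContinuousOn (f i) s) {ε : ℝ} (hε : 0 < ε) :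
    ∃ d > 0, ∀ i, ∀ x ∈ s, ∀ y ∈ s, dist x y ≤ d → dist (f i x) (f i y) ≤ ε := by
  have := hs.uniformContinuousOn_of_continuous (continuousOn_pi.2 hf)
  obtain ⟨d, hd, hmod⟩ := Metric.uniformContinuousOn_iff_le.1 this ε hε
  exact ⟨d, hd, fun i x hx y hy hxy => (dist_le_pi_dist _ _ i).trans (hmod x hx y hy hxy)⟩

theorem abs_sum_le_of_ne_zero_unique {ι : Type*} {s : Finset ι} {f : ι → ℝ} {B : ℝ}
    (hB : 0 ≤ B) (hf : ∀ i ∈ s, |f i| ≤ B)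
    (huniq : ∀ i ∈ s, ∀ j ∈ s, f i ≠ 0 → f j ≠ 0 → i = j) : |∑ i ∈ s, f i| ≤ B := by
  by_cases h : ∃ i ∈ s, f i ≠ 0
  · obtain ⟨i, hi, hfi⟩ := h
    rw [Finset.sum_eq_single_of_mem i hi fun j hj hji =>
      by_contra fun hfj => hji (huniq j hj i hi hfj hfi)]
    exact hf i hi
  · push Not at h
    rwa [Finset.sum_eq_zero h, abs_zero]

theorem abs_sub_sum_le {ι : Type*} [Fintype ι] [DecidableEq ι] {s : Finset ι} (hs : s.Nonempty)
    (a : ℝ) (v : ι → ℝ) {e B : ℝ} (he : ∀ i ∈ s, |a / #s - v i| ≤ e)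
    (hB : ∀ i ∉ s, |v i| ≤ B) : |a - ∑ i, v i| ≤ #s * e + #sᶜ * B := by
  have ha : a = ∑ _i ∈ s, a / #s := by
    rw [sum_const, nsmul_eq_mul, mul_div_cancel₀ _ (by exact_mod_cast hs.card_pos.ne')]
  calc |a - ∑ i, v i| = |∑ i ∈ s, (a / #s - v i) - ∑ i ∈ sᶜ, v i| := by
        rw [sum_sub_distrib, ← ha, ← sum_add_sum_compl s v]; ring_nf
    _ ≤ ∑ i ∈ s, |a / #s - v i| + ∑ i ∈ sᶜ, |v i| :=
        (abs_sub _ _).trans (add_le_add (abs_sum_le_sum_abs _ _) (abs_sum_le_sum_abs _ _))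
    _ ≤ #s * e + #sᶜ * B := by
        rw [← nsmul_eq_mul, ← nsmul_eq_mul]
        exact add_le_add (sum_le_card_nsmul _ _ _ he)
          (sum_le_card_nsmul _ _ _ fun i hi => hB i (mem_compl.1 hi))

theorem _root_.ContDiffBump.dist_lt_rOut_of_ne_zero {E : Type*} [NormedAddCommGroup E]
    [NormedSpace ℝ E] [HasContDiffBump E] {c x : E} (f : ContDiffBump c) (hx : f x ≠ 0) :
    dist x c < f.rOut := by
  have : x ∈ Function.support f := hx
  rwa [f.support_eq, mem_ball] at this

theorem sum_mul_pow_lt {n M : ℕ} {t : Fin n → ℕ} (ht : ∀ p, t p < M) :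
    ∑ p, t p * M ^ (p : ℕ) < M ^ n :=
  (finFunctionFinEquiv fun p => (⟨t p, ht p⟩ : Fin M)).isLt

theorem eq_of_sum_mul_pow_eq {n M : ℕ} {t t' : Fin n → ℕ} (ht : ∀ p, t p < M)
    (ht' : ∀ p, t' p < M) (h : ∑ p, t p * M ^ (p : ℕ) = ∑ p, t' p * M ^ (p : ℕ)) : t = t' := by
  have key : (finFunctionFinEquiv fun p => (⟨t p, ht p⟩ : Fin M)) =
      finFunctionFinEquiv fun p => ⟨t' p, ht' p⟩ := Fin.ext h
  have := finFunctionFinEquiv.injective key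
  exact funext fun p => congrArg Fin.val (congrFun this p)

theorem eq_of_mul_pow_add_sum_eq {n M : ℕ} {t t' : Fin n → ℕ} (ht : ∀ p, t p < M)
    (ht' : ∀ p, t' p < M) {Z Z' : ℤ}
    (h : Z * (M ^ n : ℕ) + (∑ p, t p * M ^ (p : ℕ) : ℕ) =
      Z' * (M ^ n : ℕ) + (∑ p, t' p * M ^ (p : ℕ) : ℕ)) : t = t' := by
  have hmod := congrArg (· % ((M ^ n : ℕ) : ℤ)) h
  simp only [Int.mul_add_emod_self_right, Int.emod_eq_of_lt (Nat.cast_nonneg _)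
    (Nat.cast_lt.2 (sum_mul_pow_lt ht)), Int.emod_eq_of_lt (Nat.cast_nonneg _)
    (Nat.cast_lt.2 (sum_mul_pow_lt ht'))] at hmod
  exact eq_of_sum_mul_pow_eq ht ht' (by exact_mod_cast hmod)

theorem exists_perturbation_separating_sums {n M : ℕ} (hM : 0 < M) (y : Fin n → ℕ → ℝ)
    {γ : ℝ} (hγ : 0 < γ) :
    ∃ c : Fin n → ℕ → ℝ, (∀ p, ∀ i < M, |c p i - y p i| ≤ γ) ∧
      ∀ t ∈ Fintype.piFinset fun _ => range M, ∀ t' ∈ Fintype.piFinset fun _ => range M,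
        t ≠ t' → γ / M ^ n ≤ |∑ p, c p (t p) - ∑ p, c p (t' p)| := by
  set B : ℕ := M ^ n
  have hB : (0 : ℝ) < B := by positivity
  set δ := γ / B
  have hδB : δ * B = γ := div_mul_cancel₀ γ hB.ne'
  set E : (Fin n → ℕ) → ℤ := fun t => (∑ p, ⌊y p (t p) / γ⌋) * B + (∑ p, t p * M ^ (p : ℕ) : ℕ)
  -- `c p i ∈ δℤ` and `c p i / δ ≡ i * M ^ p [ZMOD M ^ n]`, so a sum over a tuple of digits
  -- `t p < M` remembers the tuple
  refine ⟨fun p i => δ * ((⌊y p i / γ⌋ * B + i * M ^ (p : ℕ) : ℤ) : ℝ), fun p i hi => ?_,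
    fun t ht t' ht' hne => ?_⟩
  · have hdigit : (i * M ^ (p : ℕ) : ℝ) < B := by
      have : i * M ^ (p : ℕ) < B :=
        (Nat.mul_lt_mul_of_pos_right hi (by positivity)).trans_le
          (by rw [← pow_succ']; exact Nat.pow_le_pow_right hM p.2)
      exact_mod_cast this
    have h1 := Int.sub_floor_div_mul_nonneg (y p i) hγ
    have h2 := Int.sub_floor_div_mul_lt (y p i) hγ
    have h3 : δ * (i * M ^ (p : ℕ) : ℝ) < γ := by rw [← hδB]; gcongr
    have h4 : 0 ≤ δ * (i * M ^ (p : ℕ) : ℝ) := by positivity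
    have hsplit : δ * ((⌊y p i / γ⌋ * B + i * M ^ (p : ℕ) : ℤ) : ℝ) =
        ⌊y p i / γ⌋ * γ + δ * (i * M ^ (p : ℕ) : ℝ) := by
      rw [← hδB]; push_cast; ring
    beta_reduce
    rw [hsplit, abs_le]
    constructor <;> linarith
  · simp only [Fintype.mem_piFinset, Finset.mem_range] at ht ht'
    have hsum : ∀ s : Fin n → ℕ,
        ∑ p, δ * ((⌊y p (s p) / γ⌋ * B + s p * M ^ (p : ℕ) : ℤ) : ℝ) = δ * E s := by
      intro s
      simp only [E, ← Finset.mul_sum]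
      push_cast
      rw [Finset.sum_add_distrib, Finset.sum_mul]
    have hE : E t ≠ E t' := fun h => hne (eq_of_mul_pow_add_sum_eq ht ht' h)
    have h1 : (1 : ℝ) ≤ |(E t : ℝ) - E t'| := by
      exact_mod_cast Int.one_le_abs (sub_ne_zero.2 hE)
    rw [hsum, hsum, ← mul_sub, abs_mul, abs_of_pos (by positivity : 0 < δ)]
    calc γ / M ^ n = δ * 1 := by simp [δ, B]
      _ ≤ δ * |(E t : ℝ) - E t'| := by gcongr

/-! ### Grids of intervals -/

/-- The `q`-th family consists of the intervals `[(i * N + q + 1 - N) * h, (i * N + q) * h]`,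
`i : ℕ`; the cells `[k * h, (k + 1) * h]` it misses are those with `k % N = q`. -/
def gridCenter (N : ℕ) (h : ℝ) (q i : ℕ) : ℝ := (i * N + q - ((N : ℝ) - 1) / 2) * h

def gridInterval (N : ℕ) (h : ℝ) (q i : ℕ) : Set ℝ :=
  closedBall (gridCenter N h q i) (((N : ℝ) - 1) * h / 2)

def gridSize (h : ℝ) : ℕ := ⌊h⁻¹⌋₊ + 2

def gridCubes (n : ℕ) (h : ℝ) : Finset (Fin n → ℕ) :=
  Fintype.piFinset fun _ => range (gridSize h)

def gridAnchor (N : ℕ) (h : ℝ) (q i : ℕ) : ℝ := projIcc 0 1 zero_le_one (gridCenter N h q i)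

theorem gridAnchor_mem {N : ℕ} {h : ℝ} {q i : ℕ} : gridAnchor N h q i ∈ Icc (0 : ℝ) 1 :=
  (projIcc _ _ _ _).2

theorem abs_sub_gridAnchor_le {N : ℕ} {h x : ℝ} {q i : ℕ} (hx : x ∈ Icc (0 : ℝ) 1) :
    |x - gridAnchor N h q i| ≤ |x - gridCenter N h q i| := by
  have := abs_projIcc_sub_projIcc (zero_le_one' ℝ) (c := x) (d := gridCenter N h q i)
  rwa [projIcc_of_mem _ hx] at this

theorem exists_block_of_mod_ne {N k q : ℕ} (hq : q < N) (hkq : k % N ≠ q) :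
    ∃ i ≤ k, k + 1 ≤ i * N + q ∧ i * N + q + 1 ≤ k + N := by
  have hdm := Nat.div_add_mod (k + N - 1 - q) N
  have hr := Nat.mod_lt (k + N - 1 - q) (by omega : 0 < N)
  set i := (k + N - 1 - q) / N
  have hr' : (k + N - 1 - q) % N ≠ N - 1 := fun hr1 => by
    have hk : k = i * N + q := by rw [mul_comm] at hdm; omega
    simp [hk, Nat.mod_eq_of_lt hq] at hkq
  refine ⟨i, ?_, by rw [mul_comm]; omega, by rw [mul_comm]; omega⟩
  by_contra! hik
  have h1 : (k + 1) * N ≤ i * N := Nat.mul_le_mul_right N hik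
  have h2 : k ≤ k * N := Nat.le_mul_of_pos_right k (by omega)
  rw [add_mul, one_mul, mul_comm i] at h1
  omega

theorem exists_mem_gridInterval {N : ℕ} {h x : ℝ} (hh : 0 < h) (hx : x ∈ Icc (0 : ℝ) 1)
    {q : ℕ} (hq : q < N) (hqx : ⌊x / h⌋₊ % N ≠ q) :
    ∃ i < gridSize h, x ∈ gridInterval N h q i := by
  obtain ⟨i, hik, hupper, hlower⟩ := exists_block_of_mod_ne hq hqx
  set k := ⌊x / h⌋₊
  have hkx : k * h ≤ x := by
    have := Nat.floor_le (div_nonneg hx.1 hh.le)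
    rwa [le_div_iff₀ hh] at this
  have hxk : x < (k + 1) * h := by
    have := Nat.lt_floor_add_one (x / h)
    rwa [div_lt_iff₀ hh] at this
  have hk : k ≤ ⌊h⁻¹⌋₊ := Nat.floor_le_floor (by
    simpa [div_eq_mul_inv] using mul_le_mul_of_nonneg_right hx.2 (inv_nonneg.2 hh.le))
  refine ⟨i, by unfold gridSize; omega, ?_⟩
  have hup : ((k : ℝ) + 1) * h ≤ (i * N + q) * h :=
    mul_le_mul_of_nonneg_right (by exact_mod_cast hupper) hh.le
  have hlo : ((i : ℝ) * N + q + 1) * h ≤ (k + N) * h :=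
    mul_le_mul_of_nonneg_right (by exact_mod_cast hlower) hh.le
  rw [gridInterval, mem_closedBall, Real.dist_eq, abs_le, gridCenter]
  constructor <;> nlinarith

theorem exists_card_eq_forall_exists_mem_gridCubes {n N k : ℕ} (hk : k + n ≤ N) {h : ℝ}
    (hh : 0 < h) {x : Fin n → ℝ} (hx : x ∈ Icc (0 : Fin n → ℝ) 1) :
    ∃ s : Finset (Fin N), #s = k ∧ ∀ q ∈ s, ∃ t ∈ gridCubes n h,
      ∀ p, x p ∈ gridInterval N h q (t p) := by
  set bad := univ.filter fun q : Fin N => ∃ p, ⌊x p / h⌋₊ % N = q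
  have hbad : #bad ≤ n := by
    have hsub : bad.map Fin.valEmbedding ⊆ univ.image fun p => ⌊x p / h⌋₊ % N := by
      intro a ha
      simp only [bad, Finset.mem_map, Finset.mem_filter, Finset.mem_univ, true_and] at ha
      obtain ⟨q, ⟨p, hp⟩, rfl⟩ := ha
      exact Finset.mem_image.2 ⟨p, Finset.mem_univ _, hp⟩
    calc #bad = #(bad.map Fin.valEmbedding) := (card_map _).symm
      _ ≤ #(univ.image fun p => ⌊x p / h⌋₊ % N) := card_le_card hsub
      _ ≤ n := card_image_le.trans (by simp)
  obtain ⟨s, hs, hsk⟩ := exists_subset_card_eq (s := badᶜ) (n := k)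
    (by rw [card_compl, Fintype.card_fin]; omega)
  refine ⟨s, hsk, fun q hq => ?_⟩
  have hgood : ∀ p, ⌊x p / h⌋₊ % N ≠ q := by simpa [bad] using hs hq
  choose t ht hxt using fun p => exists_mem_gridInterval hh ⟨hx.1 p, hx.2 p⟩ q.2 (hgood p)
  exact ⟨t, Fintype.mem_piFinset.2 fun p => mem_range.2 (ht p), hxt⟩

def gridBump {N : ℕ} (hN : 2 ≤ N) {h : ℝ} (hh : 0 < h) (q i : ℕ) :
    ContDiffBump (gridCenter N h q i) where
  rIn := ((N : ℝ) - 1) * h / 2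
  rOut := N * h / 2
  rIn_pos := by
    have : (2 : ℝ) ≤ N := by exact_mod_cast hN
    have : 0 < ((N : ℝ) - 1) * h := mul_pos (by linarith) hh
    positivity
  rIn_lt_rOut := by linarith

section GridBump

variable {N : ℕ} (hN : 2 ≤ N) {h : ℝ} (hh : 0 < h) {q i j : ℕ} {x : ℝ}

include hh in
theorem le_dist_gridCenter (hij : i ≠ j) :
    N * h ≤ dist (gridCenter N h q i) (gridCenter N h q j) := by
  have h1 : (1 : ℝ) ≤ |(i : ℝ) - j| := by
    exact_mod_cast Int.one_le_abs (sub_ne_zero.2 (Int.ofNat_inj.not.2 hij))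
  have h2 : gridCenter N h q i - gridCenter N h q j = ((i : ℝ) - j) * (N * h) := by
    unfold gridCenter; ring
  have hNh : 0 ≤ (N : ℝ) * h := by positivity
  rw [Real.dist_eq, h2, abs_mul, abs_of_nonneg hNh]
  nlinarith

theorem gridBump_eq_one (hx : x ∈ gridInterval N h q i) : gridBump hN hh q i x = 1 :=
  ContDiffBump.one_of_mem_closedBall _ hx

theorem gridBump_eq_zero (hx : x ∈ gridInterval N h q i) (hji : j ≠ i) :
    gridBump hN hh q j x = 0 := by
  apply ContDiffBump.zero_of_le_dist
  have h1 := le_dist_gridCenter hh (q := q) (N := N) hji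
  have h2 : dist x (gridCenter N h q i) ≤ ((N : ℝ) - 1) * h / 2 := hx
  have h3 := dist_triangle_left (gridCenter N h q j) (gridCenter N h q i) x
  show N * h / 2 ≤ dist x (gridCenter N h q j)
  linarith

theorem eq_of_gridBump_ne_zero (hi : gridBump hN hh q i x ≠ 0)
    (hj : gridBump hN hh q j x ≠ 0) : i = j := by
  by_contra hij
  have h1 := le_dist_gridCenter hh (q := q) (N := N) hij
  have h2 := dist_triangle_left (gridCenter N h q i) (gridCenter N h q j) x
  have hxi : dist x (gridCenter N h q i) < N * h / 2 :=
    (gridBump hN hh q i).dist_lt_rOut_of_ne_zero hi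
  have hxj : dist x (gridCenter N h q j) < N * h / 2 :=
    (gridBump hN hh q j).dist_lt_rOut_of_ne_zero hj
  linarith

end GridBump

def gridFlatten {N : ℕ} (hN : 2 ≤ N) {h : ℝ} (hh : 0 < h) (q M : ℕ) (c : ℕ → ℝ) (u : ℝ → ℝ)
    (x : ℝ) : ℝ :=
  u x + ∑ i ∈ range M, (c i - u x) * gridBump hN hh q i x

section GridFlatten

variable {N : ℕ} (hN : 2 ≤ N) {h : ℝ} (hh : 0 < h) {q M i : ℕ} {c : ℕ → ℝ} {u : ℝ → ℝ}
  {x : ℝ}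

theorem continuousOn_gridFlatten {s : Set ℝ} (hu : ContinuousOn u s) :
    ContinuousOn (gridFlatten hN hh q M c u) s :=
  hu.add <| continuousOn_finsetSum _ fun i _ =>
    (continuousOn_const.sub hu).mul (gridBump hN hh q i).continuous.continuousOn

theorem gridFlatten_eq (hi : i < M) (hx : x ∈ gridInterval N h q i) :
    gridFlatten hN hh q M c u x = c i := by
  rw [gridFlatten, Finset.sum_eq_single_of_mem i (mem_range.2 hi) fun j _ hji => by
    rw [gridBump_eq_zero hN hh hx hji, mul_zero], gridBump_eq_one hN hh hx]
  ring

theorem abs_gridFlatten_sub_le {β : ℝ} (hβ : 0 ≤ β)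
    (hc : ∀ i < M, gridBump hN hh q i x ≠ 0 → |c i - u x| ≤ β) :
    |gridFlatten hN hh q M c u x - u x| ≤ β := by
  rw [gridFlatten, add_sub_cancel_left]
  refine abs_sum_le_of_ne_zero_unique hβ (fun i hi => ?_) fun i _ j _ hi hj =>
    eq_of_gridBump_ne_zero hN hh (right_ne_zero_of_mul hi) (right_ne_zero_of_mul hj)
  by_cases h0 : gridBump hN hh q i x = 0
  · simp [h0, hβ]
  · rw [abs_mul, abs_of_nonneg (ContDiffBump.nonneg' _ _)]
    exact (mul_le_of_le_one_right (abs_nonneg _) (gridBump hN hh q i).le_one).trans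
      (hc i (mem_range.1 hi) h0)

end GridFlatten

/-! ### Inner functions -/

def HasSeparatedPlateaus {n N : ℕ} (Ψ : Fin n → Fin N → ℝ → ℝ) (h m : ℝ) : Prop :=
  ∃ c : Fin n → Fin N → ℕ → ℝ,
    (∀ p (q : Fin N), ∀ i < gridSize h, ∀ x ∈ gridInterval N h q i ∩ Icc 0 1,
      Ψ p q x = c p q i) ∧
    ∀ q, ∀ t ∈ gridCubes n h, ∀ t' ∈ gridCubes n h, t ≠ t' →
      m ≤ |∑ p, c p q (t p) - ∑ p, c p q (t' p)|

theorem HasSeparatedPlateaus.mono {n N : ℕ} {Ψ : Fin n → Fin N → ℝ → ℝ} {h m m' : ℝ}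
    (hΨ : HasSeparatedPlateaus Ψ h m) (hm : m' ≤ m) : HasSeparatedPlateaus Ψ h m' :=
  let ⟨c, hc, hsep⟩ := hΨ
  ⟨c, hc, fun q t ht t' ht' hne => hm.trans (hsep q t ht t' ht' hne)⟩

theorem exists_hasSeparatedPlateaus {n N : ℕ} (hN : 2 ≤ N) {Ψ : Fin n → Fin N → ℝ → ℝ}
    (hΨ : ∀ p q, ContinuousOn (Ψ p q) (Icc 0 1)) {β η : ℝ} (hβ : 0 < β) (hη : 0 < η) :
    ∃ (Ψ' : Fin n → Fin N → ℝ → ℝ) (h m : ℝ), (∀ p q, ContinuousOn (Ψ' p q) (Icc 0 1)) ∧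
      (∀ p q, ∀ x ∈ Icc (0 : ℝ) 1, |Ψ' p q x - Ψ p q x| ≤ β) ∧ 0 < h ∧ h ≤ η ∧ 0 < m ∧
      HasSeparatedPlateaus Ψ' h m := by
  obtain ⟨d, hd, hmod⟩ := exists_pos_forall_dist_le_of_continuousOn isCompact_Icc
    (f := fun pq : Fin n × Fin N => Ψ pq.1 pq.2) (fun _ => hΨ _ _) (half_pos hβ)
  set h := min η (2 * d / N)
  have hh : 0 < h := lt_min hη (by positivity)
  have hNh : N * h / 2 ≤ d := by
    have : h ≤ 2 * d / N := min_le_right _ _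
    rw [le_div_iff₀ (by positivity)] at this
    linarith
  set M := gridSize h
  have hM : 0 < M := by simp [M, gridSize]
  choose c hc hsep using fun q : Fin N =>
    exists_perturbation_separating_sums hM (fun p i => Ψ p q (gridAnchor N h q i)) (half_pos hβ)
  refine ⟨fun p q => gridFlatten hN hh q M (c q p) (Ψ p q), h, β / 2 / M ^ n,
    fun p q => continuousOn_gridFlatten hN hh (hΨ p q), fun p q x hx => ?_, hh,
    min_le_left _ _, by positivity,
    ⟨fun p q => c q p, fun p q i hi x hx => gridFlatten_eq hN hh hi hx.1, fun q => hsep q⟩⟩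
  refine abs_gridFlatten_sub_le hN hh hβ.le fun i hi hx0 => ?_
  have hxa : dist x (gridAnchor N h q i) ≤ d := by
    have h1 : dist x (gridCenter N h q i) < N * h / 2 :=
      (gridBump hN hh q i).dist_lt_rOut_of_ne_zero hx0
    rw [Real.dist_eq] at h1 ⊢
    linarith [abs_sub_gridAnchor_le (N := N) (h := h) (q := q) (i := i) hx]
  have h1 := hc q p i hi
  have h2 := hmod (p, q) x hx _ gridAnchor_mem hxa
  rw [Real.dist_eq] at h2
  calc |c q p i - Ψ p q x|
      ≤ |c q p i - Ψ p q (gridAnchor N h q i)| + |Ψ p q (gridAnchor N h q i) - Ψ p q x| :=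
        abs_sub_le _ _ _
    _ ≤ β := by rw [abs_sub_comm (Ψ p q _)]; linarith

/-- With `β' ≤ β / 2`, all later corrections add up to at most `2 β'`; with `8 n β' ≤ m`, this
keeps the sums over a cube within `m / 4` of their plateau values. -/
theorem exists_halving_refinement {n N : ℕ} (hn : 0 < n) (hN : 2 ≤ N)
    {Ψ : Fin n → Fin N → ℝ → ℝ} (hΨ : ∀ p q, ContinuousOn (Ψ p q) (Icc 0 1)) {β η : ℝ}
    (hβ : 0 < β) (hη : 0 < η) :
    ∃ (Ψ' : Fin n → Fin N → ℝ → ℝ) (β' : ℝ), ((∀ p q, ContinuousOn (Ψ' p q) (Icc 0 1)) ∧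
      0 < β') ∧ (∀ p q, ∀ x ∈ Icc (0 : ℝ) 1, |Ψ' p q x - Ψ p q x| ≤ β) ∧ β' ≤ β / 2 ∧
      ∃ h, 0 < h ∧ h ≤ η ∧ HasSeparatedPlateaus Ψ' h (8 * n * β') := by
  obtain ⟨Ψ', h, m, hΨ', hclose, hh, hhη, hm, hP⟩ := exists_hasSeparatedPlateaus hN hΨ hβ hη
  refine ⟨Ψ', min (β / 2) (m / (8 * n)), ⟨hΨ', by positivity⟩, hclose, min_le_left _ _,
    h, hh, hhη, hP.mono ?_⟩
  have : min (β / 2) (m / (8 * n)) ≤ m / (8 * n) := min_le_right _ _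
  rw [le_div_iff₀ (by positivity)] at this
  linarith

def SeparatesGrid {n N : ℕ} (ψ : Fin n → Fin N → ℝ → ℝ) (h : ℝ) : Prop :=
  ∃ (V : Fin N → (Fin n → ℕ) → ℝ) (σ : ℝ), 0 < σ ∧
    (∀ q : Fin N, ∀ t ∈ gridCubes n h, ∀ x ∈ Icc (0 : Fin n → ℝ) 1,
      (∀ p, x p ∈ gridInterval N h q (t p)) → |∑ p, ψ p q (x p) - V q t| ≤ σ) ∧
    ∀ q, ∀ t ∈ gridCubes n h, ∀ t' ∈ gridCubes n h, t ≠ t' → 4 * σ ≤ |V q t - V q t'|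

theorem HasSeparatedPlateaus.separatesGrid {n N : ℕ} (hn : 0 < n)
    {Ψ ψ : Fin n → Fin N → ℝ → ℝ} {h m τ : ℝ} (hΨ : HasSeparatedPlateaus Ψ h m) (hτ : 0 < τ)
    (hm : 4 * n * τ ≤ m) (hψ : ∀ p q, ∀ x ∈ Icc (0 : ℝ) 1, |ψ p q x - Ψ p q x| ≤ τ) :
    SeparatesGrid ψ h := by
  obtain ⟨c, hc, hsep⟩ := hΨ
  refine ⟨fun q t => ∑ p, c p q (t p), n * τ, by positivity, fun q t ht x hx hxt => ?_,
    fun q t ht t' ht' hne => by linarith [hsep q t ht t' ht' hne]⟩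
  simp only [gridCubes, Fintype.mem_piFinset, Finset.mem_range] at ht
  have hxp : ∀ p, x p ∈ Icc (0 : ℝ) 1 := fun p => ⟨hx.1 p, hx.2 p⟩
  rw [← Finset.sum_sub_distrib]
  calc |∑ p, (ψ p q (x p) - c p q (t p))| ≤ ∑ p, |ψ p q (x p) - c p q (t p)| :=
        abs_sum_le_sum_abs _ _
    _ ≤ ∑ _p : Fin n, τ := sum_le_sum fun p _ => by
        rw [← hc p q (t p) (ht p) (x p) ⟨hxt p, hxp p⟩]; exact hψ p q (x p) (hxp p)
    _ = n * τ := by simp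

theorem exists_separatesGrid {n N : ℕ} (hn : 0 < n) (hN : 2 ≤ N) :
    ∃ ψ : Fin n → Fin N → ℝ → ℝ,
      (∀ p q, ContinuousOn (ψ p q) (Icc 0 1) ∧ MapsTo (ψ p q) (Icc 0 1) (Icc 0 1)) ∧
      ∀ η > 0, ∃ h, 0 < h ∧ h ≤ η ∧ SeparatesGrid ψ h := by
  obtain ⟨f, hf0, hf⟩ := exists_seq_of_forall_exists (α := (Fin n → Fin N → ℝ → ℝ) × ℝ)
    (P := fun _ Ψβ => (∀ p q, ContinuousOn (Ψβ.1 p q) (Icc 0 1)) ∧ 0 < Ψβ.2)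
    (R := fun k Ψβ Ψβ' => (∀ p q, ∀ x ∈ Icc (0 : ℝ) 1, |Ψβ'.1 p q x - Ψβ.1 p q x| ≤ Ψβ.2) ∧
      Ψβ'.2 ≤ Ψβ.2 / 2 ∧
      ∃ h, 0 < h ∧ h ≤ (1 / 2) ^ k ∧ HasSeparatedPlateaus Ψβ'.1 h (8 * n * Ψβ'.2))
    -- the limit stays within `2 * (1 / 4)` of the initial constant `1 / 2`
    (a₀ := (fun _ _ _ => 1 / 2, 1 / 4)) ⟨fun _ _ => continuousOn_const, by norm_num⟩
    fun k _ ⟨hΨ, hβ⟩ =>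
      let ⟨Ψ', β', hP, hR⟩ := exists_halving_refinement hn hN hΨ hβ (η := (1 / 2) ^ k)
        (by positivity)
      ⟨(Ψ', β'), hP, hR⟩
  choose ψ hunif hclose using fun p q => exists_tendstoUniformlyOn_of_abs_sub_le_halving
    (u := fun k => (f k).1 p q) (fun k => (hf k).2.1 p q) (fun k => (hf k).2.2.1)
  refine ⟨ψ, fun p q => ⟨(hunif p q).continuousOn (Frequently.of_forall fun k => (hf k).1.1 p q),
    fun x hx => ?_⟩, fun η hη => ?_⟩
  · have := hclose p q 0 x hx
    simp only [hf0, abs_le] at this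
    constructor <;> linarith
  · obtain ⟨k, hk⟩ := exists_pow_lt_of_lt_one hη one_half_lt_one
    obtain ⟨h, hh, hhk, hP⟩ := (hf k).2.2.2
    refine ⟨h, hh, hhk.trans hk.le, hP.separatesGrid hn (τ := 2 * (f (k + 1)).2)
      (by linarith [(hf (k + 1)).1.2]) (by linarith) fun p q x hx => ?_⟩
    rw [abs_sub_comm]
    exact hclose p q (k + 1) x hx

/-! ### Outer functions -/

def separatedBump (c : ℝ) {σ : ℝ} (hσ : 0 < σ) : ContDiffBump c :=
  ⟨σ, 2 * σ, hσ, by linarith⟩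

def bumpInterpolant {α : Type*} (T : Finset α) (V w : α → ℝ) {σ : ℝ} (hσ : 0 < σ) (y : ℝ) :
    ℝ :=
  ∑ t ∈ T, w t * separatedBump (V t) hσ y

section BumpInterpolant

variable {α : Type*} {T : Finset α} {V w : α → ℝ} {σ : ℝ} (hσ : 0 < σ)

theorem continuous_bumpInterpolant : Continuous (bumpInterpolant T V w hσ) :=
  continuous_finsetSum _ fun _ _ => continuous_const.mul (separatedBump _ hσ).continuous

variable (hV : ∀ t ∈ T, ∀ t' ∈ T, t ≠ t' → 4 * σ ≤ |V t - V t'|)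
include hV

theorem bumpInterpolant_eq {t : α} (ht : t ∈ T) {y : ℝ} (hy : |y - V t| ≤ σ) :
    bumpInterpolant T V w hσ y = w t := by
  rw [bumpInterpolant, sum_eq_single_of_mem t ht fun t' ht' hne => ?_,
    (separatedBump _ hσ).one_of_mem_closedBall (by rwa [mem_closedBall, Real.dist_eq]), mul_one]
  rw [(separatedBump _ hσ).zero_of_le_dist, mul_zero]
  have h1 := hV t' ht' t ht hne
  have h2 := abs_sub_le (V t') y (V t)
  rw [abs_sub_comm (V t') y] at h2
  show 2 * σ ≤ dist y (V t')
  rw [Real.dist_eq]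
  linarith

theorem abs_bumpInterpolant_le {B : ℝ} (hB : 0 ≤ B) (hw : ∀ t ∈ T, |w t| ≤ B) (y : ℝ) :
    |bumpInterpolant T V w hσ y| ≤ B := by
  refine abs_sum_le_of_ne_zero_unique hB (fun t ht => ?_) fun t ht t' ht' h1 h2 => ?_
  · rw [abs_mul, abs_of_nonneg ((separatedBump _ hσ).nonneg' _)]
    exact (mul_le_of_le_one_right (abs_nonneg _) (separatedBump _ hσ).le_one).trans (hw t ht)
  · by_contra hne
    have d1 : dist y (V t) < 2 * σ :=
      (separatedBump _ hσ).dist_lt_rOut_of_ne_zero (right_ne_zero_of_mul h1)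
    have d2 : dist y (V t') < 2 * σ :=
      (separatedBump _ hσ).dist_lt_rOut_of_ne_zero (right_ne_zero_of_mul h2)
    have h3 := abs_sub_le (V t) y (V t')
    rw [abs_sub_comm (V t) y] at h3
    rw [Real.dist_eq] at d1 d2
    linarith [hV t ht t' ht' hne]

end BumpInterpolant

theorem exists_outer_approx {n : ℕ} {ψ : Fin n → Fin (2 * n + 1) → ℝ → ℝ} {h : ℝ} (hh : 0 < h)
    (hψ : SeparatesGrid ψ h) {F : (Fin n → ℝ) → ℝ} {b ε : ℝ} (hb : 0 ≤ b)
    (hFb : ∀ x ∈ Icc (0 : Fin n → ℝ) 1, |F x| ≤ b)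
    (hFε : ∀ x ∈ Icc (0 : Fin n → ℝ) 1, ∀ z ∈ Icc (0 : Fin n → ℝ) 1,
      dist x z ≤ (2 * n + 1) * h → |F x - F z| ≤ ε) :
    ∃ χ : Fin (2 * n + 1) → ℝ → ℝ, (∀ q, Continuous (χ q)) ∧ (∀ q y, |χ q y| ≤ b / (n + 1)) ∧
      ∀ x ∈ Icc (0 : Fin n → ℝ) 1,
        |F x - ∑ q, χ q (∑ p, ψ p q (x p))| ≤ ε + n * (b / (n + 1)) := by
  obtain ⟨V, σ, hσ, hclose, hsep⟩ := hψ
  have hn1 : (0 : ℝ) < n + 1 := by positivity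
  let z : Fin (2 * n + 1) → (Fin n → ℕ) → Fin n → ℝ := fun q t p =>
    gridAnchor (2 * n + 1) h q (t p)
  have hz : ∀ q t, z q t ∈ Icc (0 : Fin n → ℝ) 1 := fun q t =>
    ⟨fun p => gridAnchor_mem.1, fun p => gridAnchor_mem.2⟩
  let χ q := bumpInterpolant (gridCubes n h) (V q) (fun t => F (z q t) / (n + 1)) hσ
  have hχb : ∀ q y, |χ q y| ≤ b / (n + 1) := fun q =>
    abs_bumpInterpolant_le hσ (hsep q) (by positivity) fun t _ => by
      rw [abs_div, abs_of_pos hn1]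
      exact div_le_div_of_nonneg_right (hFb _ (hz q t)) hn1.le
  refine ⟨χ, fun q => continuous_bumpInterpolant hσ, hχb, fun x hx => ?_⟩
  obtain ⟨s, hs, hgood⟩ := exists_card_eq_forall_exists_mem_gridCubes (k := n + 1)
    (N := 2 * n + 1) (by omega) hh hx
  have hsc : #sᶜ = n := by rw [card_compl, hs, Fintype.card_fin]; omega
  have hgood' : ∀ q ∈ s, |F x / #s - χ q (∑ p, ψ p q (x p))| ≤ ε / (n + 1) := by
    intro q hq
    obtain ⟨t, ht, hxt⟩ := hgood q hq
    have hdist : dist x (z q t) ≤ (2 * n + 1) * h := by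
      refine (dist_pi_le_iff (by positivity)).2 fun p => ?_
      have hxp : dist (x p) (gridCenter _ h q (t p)) ≤ ((2 * n + 1 : ℕ) - 1) * h / 2 := hxt p
      rw [Real.dist_eq] at hxp ⊢
      push_cast at hxp
      nlinarith [abs_sub_gridAnchor_le (N := 2 * n + 1) (h := h) (q := q) (i := t p)
        ⟨hx.1 p, hx.2 p⟩]
    simp only [χ]
    rw [bumpInterpolant_eq hσ (hsep q) ht (hclose q t ht x hx hxt), hs]
    push_cast
    rw [← sub_div, abs_div, abs_of_pos hn1]
    exact div_le_div_of_nonneg_right (hFε x hx _ (hz q t) hdist) hn1.le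
  have key := abs_sub_sum_le (by rw [← card_pos, hs]; omega) (F x) _ hgood' fun q _ => hχb q _
  rw [hs, hsc] at key
  push_cast at key
  convert key using 2
  field_simp

theorem exists_outer_approx_of_continuousOn {n : ℕ} {ψ : Fin n → Fin (2 * n + 1) → ℝ → ℝ}
    (hψ : ∀ η > 0, ∃ h, 0 < h ∧ h ≤ η ∧ SeparatesGrid ψ h) {F : (Fin n → ℝ) → ℝ}
    (hF : ContinuousOn F (Icc 0 1)) {b : ℝ} (hb : 0 < b)
    (hFb : ∀ x ∈ Icc (0 : Fin n → ℝ) 1, |F x| ≤ b) :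
    ∃ χ : Fin (2 * n + 1) → ℝ → ℝ, (∀ q, Continuous (χ q)) ∧
      (∀ q y, |χ q y| ≤ 1 / (n + 1) * b) ∧ ∀ x ∈ Icc (0 : Fin n → ℝ) 1,
        |F x - ∑ q, χ q (∑ p, ψ p q (x p))| ≤ (2 * n + 1) / (2 * n + 2) * b := by
  obtain ⟨d, hd, hmod⟩ := Metric.uniformContinuousOn_iff_le.1
    (isCompact_Icc.uniformContinuousOn_of_continuous hF) (b / (2 * (n + 1))) (by positivity)
  obtain ⟨h, hh, hhd, hsep⟩ := hψ (d / (2 * n + 1)) (by positivity)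
  obtain ⟨χ, hχc, hχb, hχ⟩ := exists_outer_approx hh hsep hb.le hFb fun x hx z hz hxz => by
    rw [← Real.dist_eq]
    refine hmod x hx z hz (hxz.trans ?_)
    rwa [le_div_iff₀' (by positivity)] at hhd
  refine ⟨χ, hχc, fun q y => by simpa [div_eq_inv_mul] using hχb q y, fun x hx =>
    (hχ x hx).trans_eq ?_⟩
  field_simp
  ring

/-! ### Kolmogorov's iteration -/

theorem exists_eq_sum_comp_of_approx {X ι : Type*} [TopologicalSpace X] [Fintype ι] {S : Set X}
    (hS : IsCompact S) {y : ι → X → ℝ} (hy : ∀ q, ContinuousOn (y q) S) {θ C : ℝ} (hθ0 : 0 < θ)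
    (hθ1 : θ < 1)
    (happrox : ∀ F, ContinuousOn F S → ∀ b, 0 < b → (∀ x ∈ S, |F x| ≤ b) →
      ∃ χ : ι → ℝ → ℝ, (∀ q, Continuous (χ q)) ∧ (∀ q t, |χ q t| ≤ C * b) ∧
        ∀ x ∈ S, |F x - ∑ q, χ q (y q x)| ≤ θ * b)
    {F : X → ℝ} (hF : ContinuousOn F S) :
    ∃ χ : ι → ℝ → ℝ, (∀ q, Continuous (χ q)) ∧ ∀ x ∈ S, F x = ∑ q, χ q (y q x) := by
  obtain ⟨b, hb⟩ := hS.exists_bound_of_continuousOn hF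
  obtain ⟨R, hR0, hR⟩ := exists_seq_of_forall_exists (α := X → ℝ)
    (P := fun k R => ContinuousOn R S ∧ ∀ x ∈ S, |R x| ≤ θ ^ k * max b 1)
    (R := fun k R R' => ∃ χ : ι → ℝ → ℝ, (∀ q, Continuous (χ q)) ∧
      (∀ q t, |χ q t| ≤ C * (θ ^ k * max b 1)) ∧ ∀ x, R' x = R x - ∑ q, χ q (y q x))
    (a₀ := F) ⟨hF, fun x hx => by simpa using (hb x hx).trans (le_max_left _ _)⟩
    fun k R ⟨hRc, hRb⟩ => by
      obtain ⟨χ, hχc, hχb, hχ⟩ := happrox R hRc _ (by positivity) hRb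
      refine ⟨fun x => R x - ∑ q, χ q (y q x), ⟨hRc.sub (continuousOn_finsetSum _ fun q _ =>
        (hχc q).comp_continuousOn (hy q)), fun x hx => ?_⟩, χ, hχc, hχb, fun _ => rfl⟩
      rw [pow_succ, mul_comm _ θ, mul_assoc]
      exact hχ x hx
  choose χ hχc hχb hχR using fun k => (hR k).2
  have hgeom : Summable fun k => C * (θ ^ k * max b 1) :=
    ((summable_geometric_of_lt_one hθ0.le hθ1).mul_right _).mul_left _
  refine ⟨fun q t => ∑' k, χ k q t, fun q => continuous_tsum (fun k => hχc k q) hgeom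
    fun k t => hχb k q t, fun x hx => ?_⟩
  have hsum : HasSum (fun k => ∑ q, χ k q (y q x)) (∑ q, ∑' k, χ k q (y q x)) :=
    hasSum_sum fun q _ => (hgeom.of_norm_bounded fun k => hχb k q _).hasSum
  have hRlim : Tendsto (fun K => R K x) atTop (𝓝 0) :=
    squeeze_zero_norm (fun K => (hR K).1.2 x hx) (by
      simpa using (tendsto_pow_atTop_nhds_zero_of_lt_one hθ0.le hθ1).mul_const (max b 1))
  have htel : ∀ K, ∑ k ∈ range K, ∑ q, χ k q (y q x) = F x - R K x := fun K => by
    rw [← hR0, ← sum_range_sub' (fun k => R k x)]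
    exact sum_congr rfl fun k _ => by rw [hχR k x]; ring
  refine tendsto_nhds_unique ?_ hsum.tendsto_sum_nat
  simpa [htel] using tendsto_const_nhds.sub hRlim

end

end Kolmogorov

/-- Kolmogorov Superposition Theorem with universal inner functions: the continuous
inner functions `ψ^{pq} : [0,1] → [0,1]` depend only on the dimension `n`; for every
continuous `f : [0,1]^n → ℝ` there are continuous outer functions `χ^q` with
`f(x) = ∑_{q=0}^{2n} χ^q (∑_{p=1}^n ψ^{pq}(x_p))`. -/
theorem kolmogorov_superposition_universal_inner (n : ℕ) (hn : 2 ≤ n) :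
    ∃ ψ : Fin n → Fin (2 * n + 1) → ℝ → ℝ,
      (∀ p q, ContinuousOn (ψ p q) (Set.Icc 0 1) ∧
        Set.MapsTo (ψ p q) (Set.Icc 0 1) (Set.Icc 0 1)) ∧
      ∀ f : (Fin n → ℝ) → ℝ, ContinuousOn f (Set.Icc 0 1) →
        ∃ χ : Fin (2 * n + 1) → ℝ → ℝ,
          (∀ q, Continuous (χ q)) ∧
          (∀ x ∈ Set.Icc (0 : Fin n → ℝ) 1,
            f x = ∑ q : Fin (2 * n + 1), χ q (∑ p : Fin n, ψ p q (x p))) := by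
  obtain ⟨ψ, hψ, hsep⟩ :=
    Kolmogorov.exists_separatesGrid (n := n) (N := 2 * n + 1) (by omega) (by omega)
  have hinner : ∀ q, ContinuousOn (fun x : Fin n → ℝ => ∑ p, ψ p q (x p)) (Set.Icc 0 1) :=
    fun q => continuousOn_finsetSum _ fun p _ =>
      (hψ p q).1.comp (continuous_apply p).continuousOn fun x hx => ⟨hx.1 p, hx.2 p⟩
  have hθ : ((2 : ℝ) * n + 1) / (2 * n + 2) < 1 := by
    rw [div_lt_one (by positivity)]
    linarith
  exact ⟨ψ, hψ, fun f hf => Kolmogorov.exists_eq_sum_comp_of_approx isCompact_Icc hinner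
    (C := 1 / (n + 1)) (by positivity) hθ (fun F hF b hb hFb =>
      Kolmogorov.exists_outer_approx_of_continuousOn hsep hF hb hFb) hf⟩
end

section
/- Let n ≥ 2. There exist, for each q ∈ {0,…,2n} and each j ∈ ℕ, a finite family of pairwise disjoint closed intervals A^q_{j,1}, …, A^q_{j,m_j} ⊆ ℝ, such that, defining the cubes S^q_{j;i_1,…,i_n} = A^q_{j,i_1} × ⋯ × A^q_{j,i_n} and the system 𝒮^q_j = { S^q_{j;i_1,…,i_n} : 1 ≤ i_1,…,i_n ≤ m_j }, the following hold: (i) for every x ∈ [0,1]^n and every j ∈ ℕ, there are at least n+1 values of q ∈ {0,…,2n} such that x belongs to some cube of 𝒮^q_j; (ii) for every q, the supremum over 𝒮^q_j of the diameters of the cubes tends to 0 as j → ∞. -/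
/-!
Refine `ℝ` into a grid of mesh `h` and let shift `q ∈ {0, …, N-1}` use the intervals made of
`N - 1` consecutive cells, separated by one-cell gaps placed at the cells `m ≡ q - 1 (mod N)`.
A point `t` then misses the town of shift `q` only if its cell `⌊t / h⌋` is a gap for `q`,
which singles out the one shift `q ≡ ⌊t / h⌋ + 1 (mod N)`. A point of `[0,1]^n` is therefore
missed by at most `n` of the `N = 2n + 1` shifts, while the cubes have side `(N - 1) h → 0`.
-/

open Set Filter Topology

namespace KolmogorovCovering

/-- The union of the cells `N (i - 1) + q, …, N (i - 1) + q + N - 2` of the grid of mesh `h`;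
the index is offset by one so that the interval reaching past `0` still has a natural index. -/
def shiftedInterval (N : ℕ) (h : ℝ) (q i : ℕ) : Set ℝ :=
  Icc ((N * i + q - N) * h) ((N * i + q - 1) * h)

noncomputable def intervalIndex (N : ℕ) (h : ℝ) (q : ℕ) (t : ℝ) : ℕ := (⌊t / h⌋₊ + N - q) / N

noncomputable def missedShift (N : ℕ) (h t : ℝ) : ℕ := (⌊t / h⌋₊ + 1) % N

noncomputable def mesh (N j : ℕ) : ℝ := 1 / (N * (j + 1))

variable {N : ℕ} {h : ℝ}

lemma exists_shiftedInterval_eq_Icc (hN : 0 < N) (hh : 0 ≤ h) (q i : ℕ) :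
    ∃ a b : ℝ, a ≤ b ∧ shiftedInterval N h q i = Icc a b := by
  have hN' : (1 : ℝ) ≤ N := by exact_mod_cast hN
  exact ⟨_, _, mul_le_mul_of_nonneg_right (by linarith) hh, rfl⟩

lemma disjoint_shiftedInterval (hh : 0 < h) (q : ℕ) {i i' : ℕ} (hii' : i ≠ i') :
    Disjoint (shiftedInterval N h q i) (shiftedInterval N h q i') := by
  wlog hlt : i < i' generalizing i i'
  · exact (this hii'.symm (by omega)).symm
  have hgap : (N * i + q - 1 : ℝ) < N * i' + q - N := by
    have : (N * i + N : ℝ) ≤ N * i' := by exact_mod_cast (by nlinarith : N * i + N ≤ N * i')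
    linarith
  rw [Set.disjoint_left]
  rintro t ⟨-, ht⟩ ⟨ht', -⟩
  exact absurd (ht'.trans ht) (not_le.2 (mul_lt_mul_of_pos_right hgap hh))

lemma mod_ne_pred_of_ne_mod {q r : ℕ} (hqN : q < N) (hq : q ≠ (r + 1) % N) :
    (r + N - q) % N ≠ N - 1 := by
  contrapose! hq
  calc q = (N - 1 + (q + 1)) % N := by
        rw [show N - 1 + (q + 1) = q + N by omega, Nat.add_mod_right, Nat.mod_eq_of_lt hqN]
    _ = (r + N - q + (q + 1)) % N := by rw [← hq, Nat.mod_add_mod]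
    _ = (r + 1) % N := by rw [show r + N - q + (q + 1) = r + 1 + N by omega, Nat.add_mod_right]

lemma missedShift_lt (hN : 0 < N) (h t : ℝ) : missedShift N h t < N := Nat.mod_lt _ hN

lemma mem_shiftedInterval_intervalIndex (hh : 0 < h) {t : ℝ} (ht : 0 ≤ t) {q : ℕ} (hqN : q < N)
    (hq : q ≠ missedShift N h t) : t ∈ shiftedInterval N h q (intervalIndex N h q t) := by
  set r := ⌊t / h⌋₊
  set ρ := (r + N - q) % N
  have hρ : ρ + 2 ≤ N := by
    have hne : ρ ≠ N - 1 := mod_ne_pred_of_ne_mod hqN hq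
    have hlt : ρ < N := Nat.mod_lt _ (by omega)
    omega
  have hdecomp : N * ((r + N - q) / N) + q + ρ = r + N := by
    have := Nat.div_add_mod (r + N - q) N
    omega
  have hdecompℝ : (N * ((r + N - q) / N : ℕ) + q : ℝ) = r + N - ρ := by
    rw [eq_sub_iff_add_eq]
    exact_mod_cast hdecomp
  have hρℝ : (ρ : ℝ) + 2 ≤ N := by exact_mod_cast hρ
  have hr : r * h ≤ t := (le_div_iff₀ hh).1 (Nat.floor_le (div_nonneg ht hh.le))
  have hr' : t < (r + 1) * h := (div_lt_iff₀ hh).1 (Nat.lt_floor_add_one _)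
  unfold shiftedInterval intervalIndex
  rw [hdecompℝ]
  constructor <;> nlinarith [(Nat.cast_nonneg ρ : (0 : ℝ) ≤ ρ)]

lemma intervalIndex_mesh_lt (hN : 0 < N) {j : ℕ} {t : ℝ} (ht : t ≤ 1) (q : ℕ) :
    intervalIndex N (mesh N j) q t < j + 3 := by
  have hr : ⌊t / mesh N j⌋₊ ≤ N * (j + 1) := by
    apply Nat.floor_le_of_le
    have : (0 : ℝ) < N * (j + 1) := by positivity
    rw [mesh, div_div_eq_mul_div, div_one]
    push_cast
    nlinarith
  rw [intervalIndex, Nat.div_lt_iff_lt_mul hN]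
  have := Nat.sub_le (⌊t / mesh N j⌋₊ + N) q
  nlinarith

lemma tendsto_mesh (N : ℕ) : Tendsto (mesh N) atTop (𝓝 0) := by
  have hmesh : mesh N = fun j : ℕ => (N : ℝ)⁻¹ * (1 / ((j : ℝ) + 1)) := by
    ext j
    rw [mesh]
    field_simp
  simpa [hmesh] using tendsto_one_div_add_atTop_nhds_zero_nat.const_mul (N : ℝ)⁻¹

lemma diam_setOf_forall_mem_Icc_le {ι : Type*} [Fintype ι] {a b : ι → ℝ} {w : ℝ} (hw : 0 ≤ w)
    (hab : ∀ p, b p - a p ≤ w) : Metric.diam {x : ι → ℝ | ∀ p, x p ∈ Icc (a p) (b p)} ≤ w := by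
  refine Metric.diam_le_of_forall_dist_le hw fun x hx y hy => (dist_pi_le_iff hw).2 fun p => ?_
  exact (Real.dist_le_of_mem_Icc (hx p) (hy p)).trans (hab p)

lemma diam_setOf_forall_mem_shiftedInterval_le {ι : Type*} [Fintype ι] (hN : 0 < N) (hh : 0 ≤ h)
    (q : ℕ) (i : ι → ℕ) :
    Metric.diam {x : ι → ℝ | ∀ p, x p ∈ shiftedInterval N h q (i p)} ≤ (N - 1) * h := by
  have hN' : (1 : ℝ) ≤ N := by exact_mod_cast hN
  exact diam_setOf_forall_mem_Icc_le (mul_nonneg (by linarith) hh) fun p => le_of_eq (by ring)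

lemma sub_card_le_ncard {α β : Type*} [Finite α] [Finite β] (g : α → β) {s : Set β}
    (hs : (range g)ᶜ ⊆ s) : Nat.card β - Nat.card α ≤ s.ncard :=
  calc Nat.card β - Nat.card α ≤ Nat.card β - (range g).ncard := by
        rw [← Nat.card_coe_set_eq]
        exact Nat.sub_le_sub_left (Finite.card_range_le g) _
    _ = (range g)ᶜ.ncard := (ncard_compl _).symm
    _ ≤ s.ncard := ncard_le_ncard hs

end KolmogorovCovering

open KolmogorovCovering in
theorem kolmogorov_covering_lemma_general (n : ℕ) :
    ∃ (m : ℕ → ℕ) (A : Fin (2 * n + 1) → (j : ℕ) → Fin (m j) → Set ℝ),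
      (∀ q j i, ∃ a b : ℝ, a ≤ b ∧ A q j i = Set.Icc a b) ∧
      (∀ q j, ∀ i i' : Fin (m j), i ≠ i' → Disjoint (A q j i) (A q j i')) ∧
      (∀ x ∈ Set.Icc (0 : Fin n → ℝ) 1, ∀ j : ℕ,
        n + 1 ≤ {q : Fin (2 * n + 1) |
          ∃ i : Fin n → Fin (m j), ∀ p, x p ∈ A q j (i p)}.ncard) ∧
      (∀ q : Fin (2 * n + 1), ∀ δ : ℝ, 0 < δ → ∃ J : ℕ, ∀ j ≥ J,
        ∀ i : Fin n → Fin (m j),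
          Metric.diam {x : Fin n → ℝ | ∀ p, x p ∈ A q j (i p)} ≤ δ) := by
  set N := 2 * n + 1 with hN_def
  have hN : 0 < N := Nat.succ_pos _
  have hmesh : ∀ j, 0 < mesh N j := fun j => by unfold mesh; positivity
  refine ⟨fun j => j + 3, fun q j i => shiftedInterval N (mesh N j) q i,
    fun q j i => exists_shiftedInterval_eq_Icc hN (hmesh j).le q i,
    fun q j i i' hii' => disjoint_shiftedInterval (hmesh j) q (Fin.val_ne_of_ne hii'), ?_, ?_⟩
  · intro x hx j
    let missed (p : Fin n) : Fin N := ⟨missedShift N (mesh N j) (x p), missedShift_lt hN _ _⟩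
    have hcover : (range missed)ᶜ ⊆
        {q | ∃ i : Fin n → Fin (j + 3), ∀ p, x p ∈ shiftedInterval N (mesh N j) q (i p)} := by
      intro q hq
      have hne (p : Fin n) : (q : ℕ) ≠ missedShift N (mesh N j) (x p) :=
        fun hp => hq ⟨p, Fin.ext hp.symm⟩
      exact ⟨fun p => ⟨_, intervalIndex_mesh_lt hN (hx.2 p) q⟩,
        fun p => mem_shiftedInterval_intervalIndex (hmesh j) (hx.1 p) q.isLt (hne p)⟩
    calc n + 1 = Nat.card (Fin N) - Nat.card (Fin n) := by simp only [Nat.card_fin]; omega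
      _ ≤ _ := sub_card_le_ncard missed hcover
  · intro q δ hδ
    have hwidth : Tendsto (fun j => ((N : ℝ) - 1) * mesh N j) atTop (𝓝 0) := by
      simpa using (tendsto_mesh N).const_mul ((N : ℝ) - 1)
    obtain ⟨J, hJ⟩ := eventually_atTop.1 (hwidth.eventually (ge_mem_nhds hδ))
    exact ⟨J, fun j hj i => (diam_setOf_forall_mem_shiftedInterval_le hN (hmesh j).le q
      (fun p => (i p : ℕ))).trans (hJ j hj)⟩

/-- Kolmogorov's covering lemma: for each shift `q ∈ {0,…,2n}` and level `j` there is a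
finite family of pairwise disjoint closed intervals such that every point of `[0,1]^n`
lies in a product cube for at least `n+1` of the `2n+1` shifts, and the cube diameters
tend to `0` as `j → ∞`. -/
theorem kolmogorov_covering_lemma (n : ℕ) (hn : 2 ≤ n) :
    ∃ (m : ℕ → ℕ) (A : Fin (2 * n + 1) → (j : ℕ) → Fin (m j) → Set ℝ),
      (∀ q j i, ∃ a b : ℝ, a ≤ b ∧ A q j i = Set.Icc a b) ∧
      (∀ q j, ∀ i i' : Fin (m j), i ≠ i' → Disjoint (A q j i) (A q j i')) ∧
      (∀ x ∈ Set.Icc (0 : Fin n → ℝ) 1, ∀ j : ℕ,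
        n + 1 ≤ {q : Fin (2 * n + 1) |
          ∃ i : Fin n → Fin (m j), ∀ p, x p ∈ A q j (i p)}.ncard) ∧
      (∀ q : Fin (2 * n + 1), ∀ δ : ℝ, 0 < δ → ∃ J : ℕ, ∀ j ≥ J,
        ∀ i : Fin n → Fin (m j),
          Metric.diam {x : Fin n → ℝ | ∀ p, x p ∈ A q j (i p)} ≤ δ) :=
  kolmogorov_covering_lemma_general n
end

section
/- Let n ≥ 2. There exist systems of cubes 𝒮^q_j (q ∈ {0,…,2n}, j ∈ ℕ), where each 𝒮^q_j consists of products S = A^q_{j,i_1} × ⋯ × A^q_{j,i_n} of intervals from a finite family of pairwise disjoint closed intervals A^q_{j,1},…,A^q_{j,m_j} ⊆ ℝ, together with continuous functions ψ^{pq} : [0,1] → [0,1] (p ∈ {1,…,n}, q ∈ {0,…,2n}) such that: (i) every x ∈ [0,1]^n belongs, for every j, to cubes of 𝒮^q_j for at least n+1 values of q; (ii) the cube diameters in 𝒮^q_j tend to 0 uniformly as j → ∞; and (iii) defining Ψ^q(x_1,…,x_n) = Σ_{p=1}^n ψ^{pq}(x_p), for every q, every j, and every pair of distinct cubes S_1,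 S_2 ∈ 𝒮^q_j, the images satisfy Ψ^q(S_1 ∩ [0,1]^n) ∩ Ψ^q(S_2 ∩ [0,1]^n) = ∅. -/
open Set MeasureTheory

set_option maxHeartbeats 2000000

namespace KCS

noncomputable def sn (n : ℕ) : ℝ := 2*(n:ℝ)+2

lemma sn_pos (n : ℕ) : 0 < sn n := by unfold sn; positivity

lemma two_le_sn (n : ℕ) : 2 ≤ sn n := by unfold sn; push_cast; linarith [Nat.cast_nonneg (α := ℝ) n]

noncomputable def base (n : ℕ) (h : ℝ) (q : ℕ) : ℝ := ((q:ℝ)/(sn n) + 1/(2*(sn n))) * h - 2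

noncomputable def len (n : ℕ) (h : ℝ) : ℝ := (1 - 1/(sn n)) * h

noncomputable def lft (n : ℕ) (h : ℝ) (q k : ℕ) : ℝ := base n h q + k*h

lemma len_nonneg (n : ℕ) {h : ℝ} (hh : 0 ≤ h) : 0 ≤ len n h := by
  have := two_le_sn n; have := sn_pos n
  have : 1/(sn n) ≤ 1/2 := by
    rw [div_le_div_iff₀ (sn_pos n) (by norm_num)]; linarith
  unfold len; nlinarith

lemma len_lt (n : ℕ) {h : ℝ} (hh : 0 < h) : len n h < h := by
  have h1 : 0 < 1/(sn n) := div_pos one_pos (sn_pos n)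
  unfold len; nlinarith

/-- interval slope coefficient bound: for q ≤ 2n, base is at most h - 2 and > -2. -/
lemma base_bounds (n : ℕ) {h : ℝ} (hh : 0 < h) {q : ℕ} (hq : q ≤ 2*n) :
    -2 < base n h q ∧ base n h q ≤ -2 + h := by
  have hs := sn_pos n
  have h1 : 0 < (q:ℝ)/(sn n) + 1/(2*(sn n)) := by positivity
  have h2 : (q:ℝ)/(sn n) + 1/(2*(sn n)) ≤ 1 := by
    have hqr : (q:ℝ) ≤ 2*n := by exact_mod_cast hq
    have hsn : sn n = 2*(n:ℝ)+2 := rfl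
    rw [div_add_div _ _ (ne_of_gt hs) (by positivity), div_le_one (by positivity)]
    nlinarith [hs]
  constructor
  · unfold base; nlinarith
  · unfold base; nlinarith

/-! ### Ramp and staircase functions -/

noncomputable def ramp (a g x : ℝ) : ℝ := max 0 (min 1 ((x - a)/g))

lemma ramp_continuous (a g : ℝ) : Continuous (fun x => ramp a g x) := by
  unfold ramp; fun_prop

lemma ramp_mem (a g x : ℝ) : ramp a g x ∈ Icc (0:ℝ) 1 := by
  unfold ramp
  constructor
  · exact le_max_left _ _
  · exact max_le (by norm_num) (min_le_left _ _)

lemma ramp_eq_one {a g x : ℝ} (hg : 0 < g) (hx : a + g ≤ x) : ramp a g x = 1 := by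
  unfold ramp
  have : (1:ℝ) ≤ (x - a)/g := by rw [le_div_iff₀ hg]; linarith
  rw [min_eq_left this]; norm_num

lemma ramp_eq_zero {a g x : ℝ} (hg : 0 < g) (hx : x ≤ a) : ramp a g x = 0 := by
  unfold ramp
  have h1 : (x - a)/g ≤ 0 := div_nonpos_of_nonpos_of_nonneg (by linarith) hg.le
  rw [max_eq_left]; exact le_trans (min_le_right _ _) h1

noncomputable def stair (V : ℕ → ℝ) (b h l : ℝ) (M : ℕ) (x : ℝ) : ℝ :=
  V 0 + ∑ t ∈ Finset.range (M-1), (V (t+1) - V t) * ramp (b + t*h + l) (h - l) x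

lemma stair_continuous (V : ℕ → ℝ) (b h l : ℝ) (M : ℕ) : Continuous (stair V b h l M) := by
  unfold stair
  refine continuous_const.add (continuous_finset_sum _ (fun t _ => ?_))
  exact (continuous_const.mul (ramp_continuous _ _))

section stairlemmas

variable {V : ℕ → ℝ} {b h l : ℝ} {M : ℕ}

lemma stair_const (hl : 0 ≤ l) (hlh : l < h) {k : ℕ} (hk : k < M) {x : ℝ}
    (hx : b + k*h ≤ x) (hx' : x ≤ b + k*h + l) : stair V b h l M x = V k := by
  have hg : 0 < h - l := by linarith
  unfold stair
  rw [← Finset.sum_subset (Finset.range_subset_range.mpr (by omega) :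
      Finset.range k ⊆ Finset.range (M-1)) ?van]
  case van =>
    intro t ht hts
    have htk : k ≤ t := by
      simp only [Finset.mem_range] at hts; omega
    have h1 : (k:ℝ) ≤ t := by exact_mod_cast htk
    have h2 : x ≤ b + t*h + l := by nlinarith
    rw [ramp_eq_zero hg h2, mul_zero]
  have hone : ∀ t ∈ Finset.range k, (V (t+1) - V t) * ramp (b + t*h + l) (h-l) x
      = V (t+1) - V t := by
    intro t ht
    have htk : t + 1 ≤ k := by simpa [Finset.mem_range, Nat.succ_le] using ht
    have h1 : ((t:ℝ)+1) ≤ k := by exact_mod_cast htk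
    rw [ramp_eq_one hg (by nlinarith), mul_one]
  rw [Finset.sum_congr rfl hone, Finset.sum_range_sub]
  ring

lemma stair_cell (hl : 0 ≤ l) (hlh : l < h) {k : ℕ} (hk : k + 1 < M) {x : ℝ}
    (hx : b + k*h ≤ x) (hx' : x ≤ b + (k+1)*h) :
    ∃ c ∈ Icc (0:ℝ) 1, stair V b h l M x = V k + c * (V (k+1) - V k) := by
  have hg : 0 < h - l := by linarith
  refine ⟨ramp (b + k*h + l) (h-l) x, ramp_mem _ _ _, ?_⟩
  unfold stair
  rw [← Finset.sum_subset (Finset.range_subset_range.mpr (by omega) :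
      Finset.range (k+1) ⊆ Finset.range (M-1)) ?van]
  case van =>
    intro t ht hts
    have htk : k + 1 ≤ t := by
      simp only [Finset.mem_range] at hts; omega
    have h1 : ((k:ℝ)+1) ≤ t := by exact_mod_cast htk
    have h2 : x ≤ b + t*h + l := by nlinarith
    rw [ramp_eq_zero hg h2, mul_zero]
  rw [Finset.sum_range_succ]
  have hone : ∀ t ∈ Finset.range k, (V (t+1) - V t) * ramp (b + t*h + l) (h-l) x
      = V (t+1) - V t := by
    intro t ht
    have htk : t + 1 ≤ k := by simpa [Finset.mem_range, Nat.succ_le] using ht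
    have h1 : ((t:ℝ)+1) ≤ k := by exact_mod_cast htk
    rw [ramp_eq_one hg (by nlinarith), mul_one]
  rw [Finset.sum_congr rfl hone, Finset.sum_range_sub]
  push_cast
  ring

lemma stair_left (hl : 0 ≤ l) (hlh : l < h) {x : ℝ} (hx : x ≤ b) : stair V b h l M x = V 0 := by
  have hg : 0 < h - l := by linarith
  unfold stair
  have hzero : ∀ t ∈ Finset.range (M-1), (V (t+1) - V t) * ramp (b + t*h + l) (h-l) x = 0 := by
    intro t ht
    have h1 : (0:ℝ) ≤ (t:ℝ)*h := mul_nonneg (Nat.cast_nonneg t) (by linarith)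
    rw [ramp_eq_zero hg (by nlinarith), mul_zero]
  rw [Finset.sum_congr rfl hzero, Finset.sum_const_zero]
  ring

lemma stair_right (hl : 0 ≤ l) (hlh : l < h) (hM : 1 ≤ M) {x : ℝ}
    (hx : b + ((M:ℝ)-1)*h ≤ x) : stair V b h l M x = V (M-1) := by
  have hg : 0 < h - l := by linarith
  unfold stair
  have hone : ∀ t ∈ Finset.range (M-1), (V (t+1) - V t) * ramp (b + t*h + l) (h-l) x
      = V (t+1) - V t := by
    intro t ht
    have htk : t + 1 ≤ M - 1 := by simpa [Finset.mem_range, Nat.succ_le] using ht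
    have h1 : ((t:ℝ)+1) ≤ (M:ℝ)-1 := by
      have : ((t+1 : ℕ):ℝ) ≤ ((M - 1 : ℕ):ℝ) := by exact_mod_cast htk
      push_cast at this
      rw [Nat.cast_sub hM] at this
      push_cast at this
      linarith
    rw [ramp_eq_one hg (by nlinarith), mul_one]
  rw [Finset.sum_congr rfl hone, Finset.sum_range_sub]
  ring

/-- location: every point is in a tail or in a cell. -/
lemma stair_loc (hh : 0 < h) (hM : 2 ≤ M) (x : ℝ) :
    x ≤ b ∨ (b + ((M:ℝ)-1)*h ≤ x) ∨ ∃ k, k+1 < M ∧ b + k*h ≤ x ∧ x ≤ b + (k+1)*h := by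
  by_cases h1 : x ≤ b
  · exact Or.inl h1
  by_cases h2 : b + ((M:ℝ)-1)*h ≤ x
  · exact Or.inr (Or.inl h2)
  push_neg at h1 h2
  refine Or.inr (Or.inr ?_)
  set y := (x - b)/h with hy
  have hy0 : 0 ≤ y := by
    apply div_nonneg (by linarith) hh.le
  refine ⟨min (M-2) ⌊y⌋₊, by omega, ?_, ?_⟩
  · have hk1 : ((min (M-2) ⌊y⌋₊ : ℕ):ℝ) ≤ y := by
      calc ((min (M-2) ⌊y⌋₊ : ℕ):ℝ) ≤ (⌊y⌋₊:ℝ) := by exact_mod_cast min_le_right _ _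
        _ ≤ y := Nat.floor_le hy0
    rw [hy, le_div_iff₀ hh] at hk1
    linarith
  · rcases le_or_gt (⌊y⌋₊) (M-2) with hc | hc
    · have he : min (M-2) ⌊y⌋₊ = ⌊y⌋₊ := min_eq_right hc
      rw [he]
      have hlt : y < (⌊y⌋₊:ℝ) + 1 := Nat.lt_floor_add_one y
      rw [hy, div_lt_iff₀ hh] at hlt
      push_cast
      linarith
    · have he : min (M-2) ⌊y⌋₊ = M-2 := min_eq_left (le_of_lt hc)
      rw [he]
      have hM2 : ((M-2 : ℕ):ℝ) + 1 = (M:ℝ) - 1 := by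
        rw [Nat.cast_sub (by omega)]
        push_cast
        ring
      push_cast [hM2]
      linarith

end stairlemmas

lemma combo_mem {a c z : ℝ} (hc : c ∈ Icc (0:ℝ) 1) {lo hi : ℝ}
    (ha : a ∈ Icc lo hi) (hz : z ∈ Icc lo hi) : a + c * (z - a) ∈ Icc lo hi := by
  obtain ⟨h0, h1⟩ := hc; obtain ⟨g0, g1⟩ := ha; obtain ⟨e0, e1⟩ := hz
  constructor <;> nlinarith

lemma combo_abs {a c z w : ℝ} (hc : c ∈ Icc (0:ℝ) 1) {r : ℝ}
    (ha : |a - w| ≤ r) (hz : |z - w| ≤ r) : |a + c * (z - a) - w| ≤ r := by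
  obtain ⟨h0, h1⟩ := hc
  rw [abs_le] at *
  constructor <;> nlinarith [ha.1, ha.2, hz.1, hz.2]

/-! ### generic choice of values -/

lemma exists_xi (n M : ℕ) (hn : 1 ≤ n) (c : Fin (2*n+1) → Fin n → Fin M → ℝ)
    (τ : ℝ) (hτ : 0 < τ) :
    ∃ ξ : Fin (2*n+1) → Fin n → Fin M → ℝ,
      (∀ q p k, ξ q p k ∈ Ioo (0:ℝ) 1) ∧
      ∀ q (k k' : Fin n → Fin M), k ≠ k' →
        ∑ p, (c q p (k p) + τ * ξ q p (k p)) ≠ ∑ p, (c q p (k' p) + τ * ξ q p (k' p)) := by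
  classical
  set ι := (Fin (2*n+1) × Fin n × Fin M) with hι
  let L : Fin (2*n+1) → (Fin n → Fin M) → (Fin n → Fin M) → ((ι → ℝ) →ₗ[ℝ] ℝ) :=
    fun q k k' => ∑ p : Fin n,
      (LinearMap.proj (R := ℝ) (φ := fun _ : ι => ℝ) (q, p, k p)
        - LinearMap.proj (R := ℝ) (φ := fun _ : ι => ℝ) (q, p, k' p))
  have hLapp : ∀ q k k' (x : ι → ℝ),
      L q k k' x = ∑ p : Fin n, (x (q, p, k p) - x (q, p, k' p)) := by
    intro q k k' x
    simp [L, LinearMap.sum_apply, LinearMap.sub_apply, LinearMap.proj_apply]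
  have hLne : ∀ q (k k' : Fin n → Fin M), k ≠ k' → L q k k' ≠ 0 := by
    intro q k k' hkk'
    obtain ⟨p₀, hp₀⟩ : ∃ p, k p ≠ k' p := by
      by_contra hcon; push_neg at hcon; exact hkk' (funext hcon)
    intro hL0
    set e : ι → ℝ := Pi.single ((q, p₀, k p₀) : ι) (1:ℝ) with he
    have := congrArg (fun (T : (ι → ℝ) →ₗ[ℝ] ℝ) => T e) hL0
    simp only [hLapp, LinearMap.zero_apply] at this
    have heval : ∀ p : Fin n,
        e (q, p, k p) - e (q, p, k' p) = if p = p₀ then (1:ℝ) else 0 := by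
      intro p
      by_cases hp : p = p₀
      · subst hp
        rw [if_pos rfl, he, Pi.single_eq_same, Pi.single_eq_of_ne ?h1, sub_zero]
        case h1 =>
          intro hcon
          apply hp₀
          have := congrArg (fun z : ι => z.2.2) hcon
          simpa using this.symm
      · have hd : ∀ t : Fin M, ((q, p, t) : ι) ≠ (q, p₀, k p₀) := by
          intro t hcon
          apply hp
          have := congrArg (fun z : ι => z.2.1) hcon
          simpa using this
        rw [if_neg hp, he, Pi.single_eq_of_ne (hd _), Pi.single_eq_of_ne (hd _), sub_zero]
    rw [Finset.sum_congr rfl (fun p _ => heval p)] at this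
    simp at this
  have hnull : ∀ (T : (ι → ℝ) →ₗ[ℝ] ℝ) (d : ℝ), T ≠ 0 → volume {x : ι → ℝ | T x = d} = 0 := by
    intro T d hT
    obtain ⟨z, hz⟩ : ∃ z, T z ≠ 0 := by
      by_contra hcon; push_neg at hcon
      exact hT (LinearMap.ext fun z => by simp [hcon z])
    set x₀ : ι → ℝ := (d / T z) • z with hx₀def
    have hx₀ : T x₀ = d := by
      simp only [hx₀def, LinearMap.map_smul, smul_eq_mul]
      exact div_mul_cancel₀ d hz
    have hset : {x : ι → ℝ | T x = d} = (fun y => y + x₀) '' (LinearMap.ker T : Set (ι → ℝ)) := by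
      ext x
      simp only [Set.mem_image, SetLike.mem_coe, LinearMap.mem_ker, Set.mem_setOf_eq]
      constructor
      · intro hx
        exact ⟨x - x₀, by rw [map_sub, hx, hx₀, sub_self], by ring⟩
      · rintro ⟨y, hy, rfl⟩
        rw [map_add, hy, hx₀, zero_add]
    rw [hset, Set.image_add_right, measure_preimage_add_right]
    exact Measure.addHaar_submodule volume (LinearMap.ker T)
      (by simpa [LinearMap.ker_eq_top] using hT)
  set Bad : Set (ι → ℝ) :=
    ⋃ (q : Fin (2*n+1)), ⋃ (k : Fin n → Fin M), ⋃ (k' : Fin n → Fin M),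
      ⋃ (_ : k ≠ k'), {x : ι → ℝ | L q k k' x
        = (∑ p, c q p (k' p) - ∑ p, c q p (k p)) / τ} with hBad
  have hBadNull : volume Bad = 0 := by
    refine measure_iUnion_null fun q => measure_iUnion_null fun k => measure_iUnion_null
      fun k' => ?_
    by_cases hkk' : k = k'
    · subst hkk'; simp
    · refine measure_mono_null (Set.iUnion_subset fun _ => subset_rfl) ?_
      exact hnull _ _ (hLne q k k' hkk')
  set Cube : Set (ι → ℝ) := Set.pi Set.univ (fun _ : ι => Ioo (0:ℝ) 1) with hCube
  have hCubeVol : volume Cube = 1 := by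
    rw [hCube, volume_pi_pi]
    simp [Real.volume_Ioo]
  have hdiff : volume (Cube \ Bad) = 1 := by
    rw [measure_diff_null hBadNull, hCubeVol]
  have hne : (Cube \ Bad).Nonempty := by
    apply nonempty_of_measure_ne_zero (μ := volume)
    rw [hdiff]; exact one_ne_zero
  obtain ⟨x, hxC, hxB⟩ := hne
  refine ⟨fun q p k => x (q, p, k), fun q p k => hxC (q, p, k) trivial, ?_⟩
  intro q k k' hkk' heq
  apply hxB
  rw [hBad]
  refine Set.mem_iUnion.mpr ⟨q, Set.mem_iUnion.mpr ⟨k, Set.mem_iUnion.mpr ⟨k',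
    Set.mem_iUnion.mpr ⟨hkk', ?_⟩⟩⟩⟩
  have hexp : τ * (L q k k' x) = ∑ p, c q p (k' p) - ∑ p, c q p (k p) := by
    rw [hLapp]
    have h1 : ∑ p, (c q p (k p) + τ * x (q, p, k p))
        - ∑ p, (c q p (k' p) + τ * x (q, p, k' p)) = 0 := by rw [heq]; ring
    rw [Finset.sum_add_distrib, Finset.sum_add_distrib] at h1
    rw [Finset.mul_sum]
    have h2 : ∀ p ∈ Finset.univ, τ * (x (q, p, k p) - x (q, p, k' p))
        = τ * x (q, p, k p) - τ * x (q, p, k' p) := by intro p _; ring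
    rw [Finset.sum_congr rfl h2, Finset.sum_sub_distrib]
    rw [← Finset.mul_sum, ← Finset.mul_sum] at h1 ⊢
    linarith
  show L q k k' x = _
  field_simp at hexp ⊢
  linarith [hexp]

/-! ### the state structure -/

structure St (n : ℕ) where
  h : ℝ
  hpos : 0 < h
  hsmall : h ≤ 1/16
  M : ℕ
  hM : 4 / h ≤ M
  v : Fin (2*n+1) → Fin n → ℕ → ℝ
  f : Fin (2*n+1) → Fin n → ℝ → ℝ
  fcont : ∀ q p, Continuous (f q p)
  eta : ℝ
  etapos : 0 < eta
  bud : ℝ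
  budpos : 0 < bud
  budeta : bud ≤ eta / (8*(n+1))
  budsmall : bud ≤ 1/32
  frange : ∀ q p x, f q p x ∈ Icc (1/2 : ℝ) (3/4)
  fhead : ∀ q p x, f q p x + 4*bud ≤ 3/4
  fconst : ∀ (q : Fin (2*n+1)) (p : Fin n) (k : ℕ), k < M →
    ∀ x ∈ Icc (lft n h q k) (lft n h q k + len n h), f q p x = v q p k
  vsep : ∀ q (k k' : Fin n → ℕ), (∀ p, k p < M) → (∀ p, k' p < M) → k ≠ k' →
      eta ≤ |∑ p, v q p (k p) - ∑ p, v q p (k' p)|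

def Step (n : ℕ) (S S' : St n) : Prop :=
  S'.h ≤ S.h/2 ∧ S'.bud ≤ S.bud/2 ∧
  ∀ q p, ∀ x ∈ Icc (0:ℝ) 1, |S'.f q p x - S.f q p x| ≤ S.bud/2

set_option maxHeartbeats 1000000 in
/-- The main construction step. -/
lemma build_exists (n : ℕ) (hn : 1 ≤ n) (g : Fin (2*n+1) → Fin n → ℝ → ℝ)
    (gcont : ∀ q p, Continuous (g q p))
    (grange : ∀ q p x, g q p x ∈ Icc (1/2 : ℝ) (3/4))
    (ρ : ℝ) (hρ : 0 < ρ) (hρ' : ρ ≤ 1/32)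
    (ghead : ∀ q p x, g q p x + 4*ρ ≤ 3/4)
    (δ : ℝ) (hδ : 0 < δ)
    (gmod : ∀ q p, ∀ x ∈ Icc (-3:ℝ) 3, ∀ y ∈ Icc (-3:ℝ) 3, |x-y| ≤ δ → |g q p x - g q p y| ≤ ρ/8)
    (hmax : ℝ) (hmaxpos : 0 < hmax) :
    ∃ S' : St n, S'.h ≤ hmax ∧ S'.bud ≤ ρ/2 ∧
      ∀ q p, ∀ x ∈ Icc (0:ℝ) 1, |S'.f q p x - g q p x| ≤ ρ/2 := by
  classical
  set τ := ρ/8 with hτdef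
  have hτ : 0 < τ := by positivity
  set h' := min (min hmax (δ/2)) (1/16 : ℝ) with hh'def
  have hp' : 0 < h' := by
    apply lt_min (lt_min hmaxpos (by positivity)); norm_num
  have hsmall' : h' ≤ 1/16 := min_le_right _ _
  have hδ' : h' ≤ δ := le_trans (le_trans (min_le_left _ _) (min_le_right _ _)) (by linarith)
  set M' := ⌈(4:ℝ)/h'⌉₊ with hM'def
  have hM' : 4/h' ≤ (M' : ℝ) := Nat.le_ceil _
  have hMh : 4 ≤ (M':ℝ) * h' := by
    rw [div_le_iff₀ hp'] at hM'; linarith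
  have hM2 : 2 ≤ M' := by
    by_contra hcon
    push_neg at hcon
    have h4 : (M':ℝ) ≤ 1 := by exact_mod_cast Nat.lt_succ_iff.mp (by omega)
    have h5 : (M':ℝ)*h' ≤ h' := by nlinarith
    linarith [hsmall']
  have hl0 : 0 ≤ len n h' := len_nonneg n hp'.le
  have hlh : len n h' < h' := len_lt n hp'
  -- values
  set c : Fin (2*n+1) → Fin n → Fin M' → ℝ := fun q p k => g q p (lft n h' q k) with hcdef
  obtain ⟨ξ, hξmem, hξsep⟩ := exists_xi n M' hn c τ hτ
  set Vf : Fin (2*n+1) → Fin n → ℕ → ℝ := fun q p k =>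
    if hk : k < M' then c q p ⟨k, hk⟩ + τ * ξ q p ⟨k, hk⟩ else 1/2 with hVfdef
  have hVfin : ∀ q p (k : Fin M'), Vf q p (k : ℕ) = c q p k + τ * ξ q p k := by
    intro q p k
    simp only [hVfdef]
    rw [dif_pos k.isLt]
  have hVrange : ∀ q p (k : ℕ), Vf q p k ∈ Icc (1/2 : ℝ) (3/4 - 4*ρ + τ) := by
    intro q p k
    by_cases hk : k < M'
    · simp only [hVfdef]
      rw [dif_pos hk]
      have h1 := (grange q p (lft n h' q k)).1
      have h2 := ghead q p (lft n h' q k)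
      have h3 := (hξmem q p ⟨k, hk⟩).1
      have h4 := (hξmem q p ⟨k, hk⟩).2
      constructor
      · simp only [hcdef]; nlinarith
      · simp only [hcdef]; nlinarith
    · simp only [hVfdef]
      rw [dif_neg hk]
      constructor
      · norm_num
      · nlinarith
  -- the new function
  set f' : Fin (2*n+1) → Fin n → ℝ → ℝ := fun q p =>
    stair (Vf q p) (base n h' q) h' (len n h') M' with hf'def
  -- eta
  set Sv : Fin (2*n+1) → (Fin n → Fin M') → ℝ := fun q k => ∑ p, Vf q p (k p) with hSvdef
  set Pairs : Finset (Fin (2*n+1) × (Fin n → Fin M') × (Fin n → Fin M')) :=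
    Finset.univ.filter (fun z => z.2.1 ≠ z.2.2) with hPairsdef
  have hPairsne : Pairs.Nonempty := by
    refine ⟨⟨0, fun _ => ⟨0, by omega⟩, fun _ => ⟨1, by omega⟩⟩, ?_⟩
    simp only [hPairsdef, Finset.mem_filter, Finset.mem_univ, true_and]
    intro hcon
    have := congrFun hcon ⟨0, by omega⟩
    simp [Fin.ext_iff] at this
  set T : Finset ℝ := Pairs.image (fun z => |Sv z.1 z.2.1 - Sv z.1 z.2.2|) with hTdef
  have hTne : T.Nonempty := hPairsne.image _
  set eta' := T.min' hTne with hetadef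
  have hSvne : ∀ q (k k' : Fin n → Fin M'), k ≠ k' → Sv q k ≠ Sv q k' := by
    intro q k k' hkk'
    simp only [hSvdef]
    have h1 : ∀ p : Fin n, Vf q p ((k p : ℕ)) = c q p (k p) + τ * ξ q p (k p) := fun p => by
      rw [hVfin]
    have h2 : ∀ p : Fin n, Vf q p ((k' p : ℕ)) = c q p (k' p) + τ * ξ q p (k' p) := fun p => by
      rw [hVfin]
    rw [Finset.sum_congr rfl (fun p _ => h1 p), Finset.sum_congr rfl (fun p _ => h2 p)]
    exact hξsep q k k' hkk'
  have hetapos : 0 < eta' := by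
    rw [hetadef, Finset.lt_min'_iff]
    intro b hb
    rw [hTdef, Finset.mem_image] at hb
    obtain ⟨z, hz, rfl⟩ := hb
    rw [hPairsdef, Finset.mem_filter] at hz
    have := hSvne z.1 z.2.1 z.2.2 hz.2
    exact abs_pos.mpr (sub_ne_zero.mpr this)
  set bud' := min (min (ρ/2) (eta'/(8*((n:ℝ)+1)))) (1/32 : ℝ) with hbuddef
  have hbudpos : 0 < bud' := by
    apply lt_min (lt_min (by positivity) (by positivity)); norm_num
  -- location of points of [0,1]
  have hbase : ∀ q : Fin (2*n+1), -2 < base n h' (q:ℕ) ∧ base n h' (q:ℕ) ≤ -2 + h' :=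
    fun q => base_bounds n hp' (by omega)
  have hloc : ∀ (q : Fin (2*n+1)) (x : ℝ), x ∈ Icc (0:ℝ) 1 →
      ∃ k, k + 1 < M' ∧ base n h' q + k*h' ≤ x ∧ x ≤ base n h' q + (k+1)*h' := by
    intro q x hx
    rcases stair_loc (b := base n h' q) hp' hM2 x with h1 | h2 | h3
    · exfalso
      have := (hbase q).2
      have hx0 := hx.1
      linarith [hsmall']
    · exfalso
      have h4 : base n h' (q:ℕ) + ((M':ℝ)-1)*h' ≥ -2 + 4 - h' := by nlinarith [(hbase q).1]
      have hx1 := hx.2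
      linarith [hsmall']
    · exact h3
  -- drift bound
  have hdrift : ∀ q p, ∀ x ∈ Icc (0:ℝ) 1, |f' q p x - g q p x| ≤ ρ/2 := by
    intro q p x hx
    obtain ⟨k, hk, hxl, hxr⟩ := hloc q x hx
    obtain ⟨cc, hcc, hcell⟩ := stair_cell (V := Vf q p) hl0 hlh hk hxl hxr
    have hend : ∀ t : ℕ, t < M' → |base n h' (q:ℕ) + t*h' - x| ≤ h' →
        |Vf q p t - g q p x| ≤ ρ/4 := by
      intro t ht hclose
      have htf : Vf q p t = c q p ⟨t, ht⟩ + τ * ξ q p ⟨t, ht⟩ := by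
        simp only [hVfdef]; rw [dif_pos ht]
      have hlft : lft n h' (q:ℕ) t = base n h' (q:ℕ) + t*h' := rfl
      have hmem1 : lft n h' (q:ℕ) t ∈ Icc (-3:ℝ) 3 := by
        rw [hlft]
        constructor
        · rw [abs_le] at hclose
          have := hx.1; linarith [hclose.2, hsmall']
        · rw [abs_le] at hclose
          have := hx.2; linarith [hclose.1, hsmall']
      have hmem2 : x ∈ Icc (-3:ℝ) 3 := ⟨by linarith [hx.1], by linarith [hx.2]⟩
      have hgg := gmod q p _ hmem1 x hmem2 (by
        rw [hlft]
        exact le_trans hclose hδ')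
      have hξb := hξmem q p ⟨t, ht⟩
      rw [htf]
      have : |c q p ⟨t, ht⟩ - g q p x| ≤ ρ/8 := by
        simpa only [hcdef] using hgg
      rw [abs_le] at this ⊢
      constructor
      · have := this.1; nlinarith [hξb.1, hξb.2]
      · have := this.2; nlinarith [hξb.1, hξb.2]
    have hb1 : |Vf q p k - g q p x| ≤ ρ/4 := by
      apply hend k (by omega)
      rw [abs_le]; constructor <;> [linarith; nlinarith [hp'.le]]
    have hb2 : |Vf q p (k+1) - g q p x| ≤ ρ/4 := by
      apply hend (k+1) (by omega)
      have : base n h' (q:ℕ) + ((k:ℝ)+1)*h' - x ≤ h' := by nlinarith [hp'.le]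
      rw [abs_le]; constructor
      · push_cast; linarith
      · push_cast; linarith
    rw [hf'def]
    simp only
    rw [hcell]
    have := combo_abs hcc hb1 hb2
    linarith [this]
  refine ⟨⟨h', hp', hsmall', M', hM', Vf, f', fun q p => stair_continuous _ _ _ _ _,
    eta', hetapos, bud', hbudpos, le_trans (min_le_left _ _) (min_le_right _ _),
    min_le_right _ _, ?frange, ?fhead, ?fconst, ?vsep⟩,
    le_trans (le_trans (min_le_left _ _) (min_le_left _ _)) le_rfl,
    le_trans (min_le_left _ _) (min_le_left _ _), hdrift⟩
  case frange =>
    intro q p x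
    have hup : 3/4 - 4*ρ + τ ≤ 3/4 := by rw [hτdef]; linarith
    rcases stair_loc (b := base n h' q) hp' hM2 x with h1 | h2 | h3
    · rw [hf'def]
      simp only
      rw [stair_left hl0 hlh h1]
      have := hVrange q p 0
      exact ⟨this.1, le_trans this.2 hup⟩
    · rw [hf'def]
      simp only
      rw [stair_right hl0 hlh (by omega) h2]
      have := hVrange q p (M'-1)
      exact ⟨this.1, le_trans this.2 hup⟩
    · obtain ⟨k, hk, hxl, hxr⟩ := h3
      obtain ⟨cc, hcc, hcell⟩ := stair_cell (V := Vf q p) hl0 hlh hk hxl hxr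
      rw [hf'def]
      simp only
      rw [hcell]
      have h5 := combo_mem hcc (hVrange q p k) (hVrange q p (k+1))
      exact ⟨h5.1, le_trans h5.2 hup⟩
  case fhead =>
    intro q p x
    have hbud2 : bud' ≤ ρ/2 := le_trans (min_le_left _ _) (min_le_left _ _)
    have key : f' q p x ≤ 3/4 - 4*ρ + τ := by
      rcases stair_loc (b := base n h' q) hp' hM2 x with h1 | h2 | h3
      · rw [hf'def]; simp only; rw [stair_left hl0 hlh h1]; exact (hVrange q p 0).2
      · rw [hf'def]; simp only; rw [stair_right hl0 hlh (by omega) h2]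
        exact (hVrange q p (M'-1)).2
      · obtain ⟨k, hk, hxl, hxr⟩ := h3
        obtain ⟨cc, hcc, hcell⟩ := stair_cell (V := Vf q p) hl0 hlh hk hxl hxr
        rw [hf'def]; simp only; rw [hcell]
        exact (combo_mem hcc (hVrange q p k) (hVrange q p (k+1))).2
    rw [hτdef] at key
    linarith
  case fconst =>
    intro q p k hk x hxmem
    unfold lft at hxmem
    exact stair_const hl0 hlh hk hxmem.1 hxmem.2
  case vsep =>
    intro q k k' hkb hkb' hne
    set kf : Fin n → Fin M' := fun p => ⟨k p, hkb p⟩ with hkfdef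
    set kf' : Fin n → Fin M' := fun p => ⟨k' p, hkb' p⟩ with hkf'def
    have hkfne : kf ≠ kf' := by
      intro hcon
      apply hne
      funext p
      have := congrArg (fun z => (z p : ℕ)) hcon
      simpa [hkfdef, hkf'def] using this
    have hmem : |Sv q kf - Sv q kf'| ∈ T := by
      rw [hTdef, Finset.mem_image]
      exact ⟨⟨q, kf, kf'⟩, by
        rw [hPairsdef, Finset.mem_filter]
        exact ⟨Finset.mem_univ _, hkfne⟩, rfl⟩
    have hmin := Finset.min'_le T _ hmem
    exact hmin

/-! ### covering lemmas -/

lemma covered_or_near (n : ℕ) {h : ℝ} (hpos : 0 < h) (hsmall : h ≤ 1/16) {M : ℕ}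
    (hM : 4 / h ≤ M) {q : ℕ} (hq : q ≤ 2*n) {t : ℝ} (ht : t ∈ Icc (0:ℝ) 1) :
    (∃ k, k < M ∧ t ∈ Icc (lft n h q k) (lft n h q k + len n h)) ∨
      ∃ κ : ℤ, |((t+2)/h - q/(sn n)) - κ| < 1/(2*(sn n)) := by
  have hs := sn_pos n
  have hs2 := two_le_sn n
  set u := (t+2)/h - q/(sn n) with hu
  have hq1 : (q:ℝ)/(sn n) ≤ 1 := by
    rw [div_le_one hs]
    have h1 : (q:ℝ) ≤ 2*n := by exact_mod_cast hq
    have h2 : sn n = 2*(n:ℝ)+2 := rfl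
    linarith
  have ht2 : (2:ℝ)/h ≤ (t+2)/h := by
    apply (div_le_div_iff_of_pos_right hpos).mpr
    linarith [ht.1]
  have h32 : (32:ℝ) ≤ 2/h := by
    rw [le_div_iff₀ hpos]; linarith
  have hu0 : 0 ≤ u := by rw [hu]; linarith
  have hum : u < M := by
    have h3 : (t+2)/h ≤ 3/h := by
      apply (div_le_div_iff_of_pos_right hpos).mpr
      linarith [ht.2]
    have h4 : (3:ℝ)/h < 4/h := (div_lt_div_iff_of_pos_right hpos).mpr (by norm_num)
    have h5 : (0:ℝ) ≤ (q:ℝ)/(sn n) := by positivity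
    rw [hu]
    linarith [hM]
  set k₀ := ⌊u⌋₊ with hk₀
  have hk₀u : (k₀:ℝ) ≤ u := by rw [hk₀]; exact Nat.floor_le hu0
  have huk₀ : u < (k₀:ℝ) + 1 := by rw [hk₀]; exact Nat.lt_floor_add_one u
  have hk₀M : k₀ < M := by
    rw [hk₀]
    exact (Nat.floor_lt hu0).mpr hum
  have hshalf : 0 < 1/(2*(sn n)) := by positivity
  clear_value u k₀
  by_cases hc1 : u < (k₀:ℝ) + 1/(2*(sn n))
  · refine Or.inr ⟨(k₀ : ℤ), ?_⟩
    rw [abs_lt]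
    constructor
    · push_cast; linarith
    · push_cast; linarith
  push_neg at hc1
  by_cases hc2 : (k₀:ℝ) + 1 - 1/(2*(sn n)) < u
  · refine Or.inr ⟨(k₀ : ℤ) + 1, ?_⟩
    rw [abs_lt]
    constructor
    · push_cast; linarith
    · push_cast; linarith
  push_neg at hc2
  refine Or.inl ⟨k₀, hk₀M, ?_, ?_⟩
  · have hexp : lft n h q k₀ = ((q:ℝ)/(sn n) + 1/(2*(sn n))) * h - 2 + k₀*h := rfl
    have htu : t = (u + (q:ℝ)/(sn n))*h - 2 := by
      rw [hu]
      field_simp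
      all_goals ring
    rw [hexp, htu]
    nlinarith [hc1, hpos.le]
  · have hexp : lft n h q k₀ = ((q:ℝ)/(sn n) + 1/(2*(sn n))) * h - 2 + k₀*h := rfl
    have htu : t = (u + (q:ℝ)/(sn n))*h - 2 := by
      rw [hu]
      field_simp
      all_goals ring
    have hhalf : 1/(sn n) = 2*(1/(2*(sn n))) := by
      rw [div_eq_iff (ne_of_gt (sn_pos n))]
      field_simp
    rw [hexp, htu]
    unfold len
    nlinarith [hc2, hpos.le]

lemma near_unique (n : ℕ) {h : ℝ} (hpos : 0 < h) {q q' : ℕ} (hq : q ≤ 2*n) (hq' : q' ≤ 2*n)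
    (hne : q ≠ q') {t : ℝ} {κ κ' : ℤ}
    (h1 : |((t+2)/h - q/(sn n)) - κ| < 1/(2*(sn n)))
    (h2 : |((t+2)/h - q'/(sn n)) - κ'| < 1/(2*(sn n))) : False := by
  have hs := sn_pos n
  set d : ℤ := (q':ℤ) - (q:ℤ) - (2*(n:ℤ)+2)*(κ - κ') with hd
  have hdne : d ≠ 0 := by
    rcases eq_or_ne κ κ' with hκ | hκ
    · subst hκ
      rw [hd]
      simp only [sub_self, mul_zero, sub_zero]
      intro hcon
      apply hne
      omega
    · intro hcon
      have h3 : (q':ℤ) - (q:ℤ) = (2*(n:ℤ)+2)*(κ - κ') := by omega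
      have h4 : (q' : ℤ) - q ≤ 2*n := by omega
      have h5 : -(2*(n:ℤ)) ≤ (q':ℤ) - q := by omega
      have h6 : 1 ≤ (κ - κ').natAbs := by omega
      have h7 : ((q':ℤ) - q).natAbs = (2*(n:ℤ)+2).natAbs * (κ - κ').natAbs := by
        rw [h3, Int.natAbs_mul]
      have h8 : ((q':ℤ) - q).natAbs ≤ 2*n := by omega
      have h9 : (2*(n:ℤ)+2).natAbs = 2*n+2 := by omega
      rw [h9] at h7
      nlinarith [h6, h7, h8]
  have habs : (1:ℝ) ≤ |(d:ℝ)| := by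
    have := Int.one_le_abs hdne
    exact_mod_cast this
  have hrel : ((d:ℝ))/(sn n) = ((t+2)/h - q/(sn n) - κ) - ((t+2)/h - q'/(sn n) - κ') := by
    have hsn : sn n = 2*(n:ℝ)+2 := rfl
    rw [hd]
    push_cast
    field_simp [hsn]
    rw [hsn]
    ring
  have htri : |((d:ℝ))/(sn n)| < 1/(sn n) := by
    rw [hrel]
    calc |((t+2)/h - q/(sn n) - κ) - ((t+2)/h - q'/(sn n) - κ')|
        ≤ |((t+2)/h - q/(sn n) - κ)| + |((t+2)/h - q'/(sn n) - κ')| := abs_sub _ _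
      _ < 1/(2*(sn n)) + 1/(2*(sn n)) := by linarith
      _ = 1/(sn n) := by
          rw [← add_div, div_eq_div_iff (by positivity) (ne_of_gt hs)]
          ring
  rw [abs_div, abs_of_pos hs, div_lt_div_iff₀ hs hs] at htri
  nlinarith [habs, hs]

/-! ### iteration -/

lemma step_exists (n : ℕ) (hn : 1 ≤ n) (S : St n) : ∃ S', Step n S S' := by
  classical
  set F : ℝ → (Fin (2*n+1) × Fin n → ℝ) := fun x qp => S.f qp.1 qp.2 x with hF
  have hFcont : Continuous F := continuous_pi (fun qp => S.fcont qp.1 qp.2)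
  have hUC : UniformContinuousOn F (Icc (-3:ℝ) 3) :=
    isCompact_Icc.uniformContinuousOn_of_continuous hFcont.continuousOn
  rw [Metric.uniformContinuousOn_iff_le] at hUC
  obtain ⟨δ, hδpos, hδ⟩ := hUC (S.bud/8) (div_pos S.budpos (by norm_num))
  have gmod : ∀ q p, ∀ x ∈ Icc (-3:ℝ) 3, ∀ y ∈ Icc (-3:ℝ) 3, |x-y| ≤ δ →
      |S.f q p x - S.f q p y| ≤ S.bud/8 := by
    intro q p x hx y hy hxy
    have h1 := hδ x hx y hy (by rwa [Real.dist_eq])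
    have h2 : dist (F x (q,p)) (F y (q,p)) ≤ dist (F x) (F y) := dist_le_pi_dist _ _ _
    rw [Real.dist_eq] at h2
    exact le_trans (le_trans h2 h1) le_rfl
  obtain ⟨S', h1, h2, h3⟩ := build_exists n hn S.f S.fcont S.frange S.bud S.budpos
    S.budsmall S.fhead δ hδpos gmod (S.h/2) (by linarith [S.hpos])
  exact ⟨S', h1, h2, h3⟩

lemma init_exists (n : ℕ) (hn : 1 ≤ n) : ∃ S : St n, True := by
  obtain ⟨S, -, -, -⟩ := build_exists n hn (fun _ _ _ => 1/2)
    (fun _ _ => continuous_const) (fun _ _ _ => by norm_num) (1/32) (by norm_num) le_rfl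
    (fun _ _ _ => by norm_num) 1 one_pos (fun q p x _ y _ _ => by norm_num) (1/16) (by norm_num)
  exact ⟨S, trivial⟩

noncomputable def stages (n : ℕ) (hn : 1 ≤ n) : ℕ → St n
  | 0 => (init_exists n hn).choose
  | j+1 => (step_exists n hn (stages n hn j)).choose

lemma stages_step (n : ℕ) (hn : 1 ≤ n) (j : ℕ) :
    Step n (stages n hn j) (stages n hn (j+1)) :=
  (step_exists n hn (stages n hn j)).choose_spec

lemma h_decay (n : ℕ) (hn : 1 ≤ n) (j : ℕ) : (stages n hn j).h ≤ (1/2:ℝ)^j := by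
  induction j with
  | zero => simpa using le_trans (stages n hn 0).hsmall (by norm_num)
  | succ j ih =>
    have := (stages_step n hn j).1
    rw [pow_succ]
    linarith

lemma bud_decay (n : ℕ) (hn : 1 ≤ n) (j t : ℕ) :
    (stages n hn (j+t)).bud ≤ (stages n hn j).bud * (1/2:ℝ)^t := by
  induction t with
  | zero => simp
  | succ t ih =>
    have h1 := (stages_step n hn (j+t)).2.1
    have h2 : (stages n hn (j + t)).bud / 2 ≤ (stages n hn j).bud * (1/2:ℝ)^t / 2 := by
      linarith
    calc (stages n hn (j+(t+1))).bud = (stages n hn ((j+t)+1)).bud := rfl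
      _ ≤ (stages n hn (j+t)).bud / 2 := h1
      _ ≤ (stages n hn j).bud * (1/2:ℝ)^t / 2 := h2
      _ = (stages n hn j).bud * (1/2:ℝ)^(t+1) := by rw [pow_succ]; ring

lemma bud_zero_small (n : ℕ) (hn : 1 ≤ n) (j : ℕ) :
    (stages n hn j).bud ≤ (1/32:ℝ) * (1/2:ℝ)^j := by
  have := bud_decay n hn 0 j
  simp only [Nat.zero_add] at this
  have h2 := (stages n hn 0).budsmall
  have h3 : (0:ℝ) < (1/2:ℝ)^j := by positivity
  nlinarith [this]

/-! ### the inner functions -/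

noncomputable def psi (n : ℕ) (hn : 1 ≤ n) (p : Fin n) (q : Fin (2*n+1)) (x : ℝ) : ℝ :=
  (stages n hn 0).f q p x +
    ∑' j : ℕ, ((stages n hn (j+1)).f q p x - (stages n hn j).f q p x)

lemma D_bound (n : ℕ) (hn : 1 ≤ n) (q : Fin (2*n+1)) (p : Fin n) (j : ℕ) {x : ℝ}
    (hx : x ∈ Icc (0:ℝ) 1) :
    |(stages n hn (j+1)).f q p x - (stages n hn j).f q p x| ≤ (stages n hn j).bud / 2 :=
  (stages_step n hn j).2.2 q p x hx

lemma D_summable (n : ℕ) (hn : 1 ≤ n) (q : Fin (2*n+1)) (p : Fin n) (j₀ : ℕ) {x : ℝ}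
    (hx : x ∈ Icc (0:ℝ) 1) :
    Summable (fun t => |(stages n hn (t+j₀+1)).f q p x - (stages n hn (t+j₀)).f q p x|) := by
  refine Summable.of_nonneg_of_le (f := fun t => ((stages n hn j₀).bud / 2) * (1/2:ℝ)^t)
    (fun t => abs_nonneg _) (fun t => ?_) (summable_geometric_two.mul_left _)
  · have h1 := D_bound n hn q p (t+j₀) hx
    have h2 := bud_decay n hn j₀ t
    have h3 : (stages n hn (j₀ + t)).bud = (stages n hn (t + j₀)).bud := by rw [Nat.add_comm]
    calc |(stages n hn (t+j₀+1)).f q p x - (stages n hn (t+j₀)).f q p x|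
        ≤ (stages n hn (t+j₀)).bud / 2 := h1
      _ ≤ ((stages n hn j₀).bud * (1/2:ℝ)^t) / 2 := by rw [← h3]; linarith
      _ = ((stages n hn j₀).bud / 2) * (1/2:ℝ)^t := by ring

lemma psi_partial (n : ℕ) (hn : 1 ≤ n) (q : Fin (2*n+1)) (p : Fin n) (j : ℕ) {x : ℝ}
    (hx : x ∈ Icc (0:ℝ) 1) :
    |psi n hn p q x - (stages n hn j).f q p x| ≤ (stages n hn j).bud := by
  have hsum0 : Summable (fun t => |(stages n hn (t+1)).f q p x - (stages n hn t).f q p x|) := by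
    simpa using D_summable n hn q p 0 hx
  have hsum : Summable (fun t => (stages n hn (t+1)).f q p x - (stages n hn t).f q p x) :=
    hsum0.of_abs
  have htel : (∑ t ∈ Finset.range j,
      ((stages n hn (t+1)).f q p x - (stages n hn t).f q p x))
      = (stages n hn j).f q p x - (stages n hn 0).f q p x :=
    Finset.sum_range_sub (fun t => (stages n hn t).f q p x) j
  have hsplit := Summable.sum_add_tsum_nat_add (f := fun t =>
    (stages n hn (t+1)).f q p x - (stages n hn t).f q p x) j hsum
  have hpsi : psi n hn p q x = (stages n hn j).f q p x +
      ∑' t, ((stages n hn (t+j+1)).f q p x - (stages n hn (t+j)).f q p x) := by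
    unfold psi
    rw [← hsplit, htel]
    ring
  rw [hpsi]
  have habs : |∑' t, ((stages n hn (t+j+1)).f q p x - (stages n hn (t+j)).f q p x)|
      ≤ ∑' t, |(stages n hn (t+j+1)).f q p x - (stages n hn (t+j)).f q p x| := by
    have := norm_tsum_le_tsum_norm (f := fun t =>
      (stages n hn (t+j+1)).f q p x - (stages n hn (t+j)).f q p x)
      (by simpa [Real.norm_eq_abs] using D_summable n hn q p j hx)
    simpa [Real.norm_eq_abs] using this
  have hle : ∑' t, |(stages n hn (t+j+1)).f q p x - (stages n hn (t+j)).f q p x|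
      ≤ ∑' t : ℕ, ((stages n hn j).bud / 2) * (1/2:ℝ)^t := by
    apply Summable.tsum_le_tsum _ (D_summable n hn q p j hx) (summable_geometric_two.mul_left _)
    intro t
    have h1 := D_bound n hn q p (t+j) hx
    have h2 := bud_decay n hn j t
    have h3 : (stages n hn (j + t)).bud = (stages n hn (t + j)).bud := by rw [Nat.add_comm]
    calc |(stages n hn (t+j+1)).f q p x - (stages n hn (t+j)).f q p x|
        ≤ (stages n hn (t+j)).bud / 2 := h1
      _ ≤ ((stages n hn j).bud * (1/2:ℝ)^t) / 2 := by rw [← h3]; linarith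
      _ = ((stages n hn j).bud / 2) * (1/2:ℝ)^t := by ring
  have hgeo : ∑' t : ℕ, ((stages n hn j).bud / 2) * (1/2:ℝ)^t = (stages n hn j).bud := by
    rw [tsum_mul_left, tsum_geometric_two]
    ring
  have := abs_sub_comm (psi n hn p q x) ((stages n hn j).f q p x)
  calc |(stages n hn j).f q p x +
        (∑' t, ((stages n hn (t+j+1)).f q p x - (stages n hn (t+j)).f q p x))
        - (stages n hn j).f q p x|
      = |∑' t, ((stages n hn (t+j+1)).f q p x - (stages n hn (t+j)).f q p x)| := by
        rw [add_sub_cancel_left]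
    _ ≤ _ := habs
    _ ≤ _ := hle
    _ = _ := hgeo

lemma psi_continuousOn (n : ℕ) (hn : 1 ≤ n) (p : Fin n) (q : Fin (2*n+1)) :
    ContinuousOn (psi n hn p q) (Icc (0:ℝ) 1) := by
  apply ContinuousOn.add ((stages n hn 0).fcont q p).continuousOn
  apply continuousOn_tsum (u := fun j => (1/32:ℝ) * (1/2:ℝ)^j)
  · intro i
    exact (((stages n hn (i+1)).fcont q p).sub ((stages n hn i).fcont q p)).continuousOn
  · exact summable_geometric_two.mul_left _
  · intro t x hx
    have h1 := D_bound n hn q p t hx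
    have h2 := bud_zero_small n hn t
    rw [Real.norm_eq_abs]
    calc |(stages n hn (t+1)).f q p x - (stages n hn t).f q p x|
        ≤ (stages n hn t).bud / 2 := h1
      _ ≤ (1/32:ℝ) * (1/2:ℝ)^t := by
          have h3 : (0:ℝ) < (1/2:ℝ)^t := by positivity
          nlinarith

lemma psi_mapsTo (n : ℕ) (hn : 1 ≤ n) (p : Fin n) (q : Fin (2*n+1)) :
    Set.MapsTo (psi n hn p q) (Icc (0:ℝ) 1) (Icc (0:ℝ) 1) := by
  intro x hx
  have h1 := psi_partial n hn q p 0 hx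
  have h2 := (stages n hn 0).frange q p x
  have h3 := (stages n hn 0).budsmall
  have h4 := (stages n hn 0).budpos
  rw [abs_le] at h1
  constructor
  · have := h2.1; linarith [h1.1]
  · have := h2.2; linarith [h1.2]

lemma interval_disj (n : ℕ) {h : ℝ} (hp : 0 < h) (q : ℕ) {k k' : ℕ} (hkk : k < k')
    {a : ℝ} (h1 : a ∈ Icc (lft n h q k) (lft n h q k + len n h))
    (h2 : a ∈ Icc (lft n h q k') (lft n h q k' + len n h)) : False := by
  have hc : (k:ℝ) + 1 ≤ k' := by exact_mod_cast hkk
  have hl := len_lt n hp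
  have ha1 := h1.2
  have ha2 := h2.1
  unfold lft at ha1 ha2
  nlinarith

lemma covering (n : ℕ) (hn : 1 ≤ n) (j : ℕ) (x : Fin n → ℝ)
    (hx : ∀ p, x p ∈ Icc (0:ℝ) 1) :
    n + 1 ≤ {q : Fin (2*n+1) | ∃ i : Fin n → Fin ((stages n hn j).M), ∀ p : Fin n,
      x p ∈ Icc (lft n (stages n hn j).h q (i p))
        (lft n (stages n hn j).h q (i p) + len n (stages n hn j).h)}.ncard := by
  classical
  set S := stages n hn j with hS
  set Bp : Fin n → Set (Fin (2*n+1)) := fun p => {q | ¬ ∃ k, k < S.M ∧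
    x p ∈ Icc (lft n S.h q k) (lft n S.h q k + len n S.h)} with hBp
  have hqle : ∀ q : Fin (2*n+1), (q:ℕ) ≤ 2*n := fun q => by omega
  have hsub : ∀ p, (Bp p).Subsingleton := by
    intro p q hq q' hq'
    by_contra hne
    have hr1 := covered_or_near n S.hpos S.hsmall S.hM (hqle q) (hx p)
    have hr2 := covered_or_near n S.hpos S.hsmall S.hM (hqle q') (hx p)
    rcases hr1 with hc1 | ⟨κ, hκ⟩
    · exact hq hc1
    rcases hr2 with hc2 | ⟨κ', hκ'⟩
    · exact hq' hc2
    exact near_unique n S.hpos (hqle q) (hqle q')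
      (fun hcon => hne (Fin.val_injective hcon)) hκ hκ'
  have hw : ∀ p, ∃ w : Fin (2*n+1), Bp p ⊆ {w} := by
    intro p
    rcases (Bp p).eq_empty_or_nonempty with he | hnem
    · exact ⟨⟨0, by omega⟩, by rw [he]; exact Set.empty_subset _⟩
    · obtain ⟨q0, hq0⟩ := hnem
      exact ⟨q0, fun q hq => hsub p hq hq0⟩
  choose w hwspec using hw
  set Bad : Set (Fin (2*n+1)) := {q | ¬ ∃ i : Fin n → Fin S.M, ∀ p : Fin n,
    x p ∈ Icc (lft n S.h q (i p)) (lft n S.h q (i p) + len n S.h)} with hBad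
  have hBadsub : Bad ⊆ Set.range w := by
    intro q hq
    have hex : ∃ p, q ∈ Bp p := by
      by_contra hcon
      push_neg at hcon
      apply hq
      have hex2 : ∀ p : Fin n, ∃ k, k < S.M ∧
          x p ∈ Icc (lft n S.h q k) (lft n S.h q k + len n S.h) := by
        intro p
        have := hcon p
        rw [hBp] at this
        simpa using this
      choose k hk1 hk2 using hex2
      exact ⟨fun p => ⟨k p, hk1 p⟩, fun p => hk2 p⟩
    obtain ⟨p, hp⟩ := hex
    exact ⟨p, (hwspec p hp).symm⟩
  have hBadn : Bad.ncard ≤ n := by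
    calc Bad.ncard ≤ (Set.range w).ncard :=
          Set.ncard_le_ncard hBadsub (Set.finite_range w)
      _ = (w '' Set.univ).ncard := by rw [Set.image_univ]
      _ ≤ (Set.univ : Set (Fin n)).ncard := Set.ncard_image_le Set.finite_univ
      _ = n := by rw [Set.ncard_univ, Nat.card_eq_fintype_card, Fintype.card_fin]
  have hcompl : Bad.ncard + Badᶜ.ncard = 2*n+1 := by
    rw [Set.ncard_add_ncard_compl, Nat.card_eq_fintype_card, Fintype.card_fin]
  have hgoal : {q : Fin (2*n+1) | ∃ i : Fin n → Fin S.M, ∀ p : Fin n,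
      x p ∈ Icc (lft n S.h q (i p)) (lft n S.h q (i p) + len n S.h)} = Badᶜ := by
    ext q
    simp only [hBad, Set.mem_compl_iff, Set.mem_setOf_eq, not_not]
  rw [hgoal]
  omega

end KCS

set_option maxHeartbeats 2000000 in
/-- Kolmogorov's covering lemma together with the separation lemma: there exist town
systems of pairwise disjoint closed cubes covering every point of `[0,1]^n` for at least
`n+1` shifts with diameters shrinking to `0`, and continuous inner functions
`ψ^{pq} : [0,1] → [0,1]` such that `Ψ^q(x) = ∑_p ψ^{pq}(x_p)` maps distinct cubes of each
system (intersected with the unit cube) to disjoint sets. -/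
theorem kolmogorov_covering_and_separation (n : ℕ) (hn : 2 ≤ n) :
    ∃ (m : ℕ → ℕ) (A : Fin (2 * n + 1) → (j : ℕ) → Fin (m j) → Set ℝ)
      (ψ : Fin n → Fin (2 * n + 1) → ℝ → ℝ),
      (∀ q j i, ∃ a b : ℝ, a ≤ b ∧ A q j i = Set.Icc a b) ∧
      (∀ q j, ∀ i i' : Fin (m j), i ≠ i' → Disjoint (A q j i) (A q j i')) ∧
      (∀ p q, ContinuousOn (ψ p q) (Set.Icc 0 1) ∧
        Set.MapsTo (ψ p q) (Set.Icc 0 1) (Set.Icc 0 1)) ∧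
      (∀ x ∈ Set.Icc (0 : Fin n → ℝ) 1, ∀ j : ℕ,
        n + 1 ≤ {q : Fin (2 * n + 1) |
          ∃ i : Fin n → Fin (m j), ∀ p, x p ∈ A q j (i p)}.ncard) ∧
      (∀ q : Fin (2 * n + 1), ∀ δ : ℝ, 0 < δ → ∃ J : ℕ, ∀ j ≥ J,
        ∀ i : Fin n → Fin (m j),
          Metric.diam {x : Fin n → ℝ | ∀ p, x p ∈ A q j (i p)} ≤ δ) ∧
      (∀ q : Fin (2 * n + 1), ∀ j : ℕ, ∀ i i' : Fin n → Fin (m j), i ≠ i' →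
        Disjoint
          ((fun x : Fin n → ℝ => ∑ p : Fin n, ψ p q (x p)) ''
            ({x : Fin n → ℝ | ∀ p, x p ∈ A q j (i p)} ∩ Set.Icc 0 1))
          ((fun x : Fin n → ℝ => ∑ p : Fin n, ψ p q (x p)) ''
            ({x : Fin n → ℝ | ∀ p, x p ∈ A q j (i' p)} ∩ Set.Icc 0 1))) := by
  classical
  have hn1 : 1 ≤ n := by omega
  refine ⟨fun j => (KCS.stages n hn1 j).M,
    fun q j i => Set.Icc (KCS.lft n (KCS.stages n hn1 j).h q i)
      (KCS.lft n (KCS.stages n hn1 j).h q i + KCS.len n (KCS.stages n hn1 j).h),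
    fun p q => KCS.psi n hn1 p q, ?_, ?_, ?_, ?_, ?_, ?_⟩
  · -- (1) intervals
    intro q j i
    exact ⟨_, _, by linarith [KCS.len_nonneg n (KCS.stages n hn1 j).hpos.le], rfl⟩
  · -- (2) disjointness
    intro q j i i' hne
    rw [Set.disjoint_left]
    intro a ha ha'
    have hvne : (i:ℕ) ≠ (i':ℕ) := fun hcon => hne (Fin.val_injective hcon)
    rcases Nat.lt_or_ge (i:ℕ) (i':ℕ) with hlt | hge
    · exact KCS.interval_disj n (KCS.stages n hn1 j).hpos q hlt ha ha'
    · exact KCS.interval_disj n (KCS.stages n hn1 j).hpos q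
        (by omega : (i':ℕ) < (i:ℕ)) ha' ha
  · -- (3) continuity and range
    intro p q
    exact ⟨KCS.psi_continuousOn n hn1 p q, KCS.psi_mapsTo n hn1 p q⟩
  · -- (4) covering
    intro x hx j
    exact KCS.covering n hn1 j x (fun p => ⟨hx.1 p, hx.2 p⟩)
  · -- (5) diameters
    intro q δ hδ
    obtain ⟨J, hJ⟩ : ∃ J : ℕ, (1/2:ℝ)^J < δ :=
      exists_pow_lt_of_lt_one hδ (by norm_num)
    refine ⟨J, fun j hj i => ?_⟩
    apply Metric.diam_le_of_forall_dist_le hδ.le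
    intro x hx y hy
    rw [dist_pi_le_iff hδ.le]
    intro p
    have hxp := hx p
    have hyp := hy p
    have hlen : KCS.len n (KCS.stages n hn1 j).h ≤ (KCS.stages n hn1 j).h :=
      (KCS.len_lt n (KCS.stages n hn1 j).hpos).le
    have hhj : (KCS.stages n hn1 j).h ≤ (1/2:ℝ)^j := KCS.h_decay n hn1 j
    have hmono : (1/2:ℝ)^j ≤ (1/2:ℝ)^J :=
      pow_le_pow_of_le_one (by norm_num) (by norm_num) hj
    rw [Real.dist_eq, abs_le]
    constructor
    · have := hxp.1; have := hyp.2; simp only [Set.mem_Icc] at *; linarith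
    · have := hxp.2; have := hyp.1; simp only [Set.mem_Icc] at *; linarith
  · -- (6) separation
    intro q j i i' hne
    set S := KCS.stages n hn1 j with hS
    have key : ∀ (ii : Fin n → Fin S.M) (x : Fin n → ℝ),
        (∀ p, x p ∈ Set.Icc (KCS.lft n S.h q (ii p))
          (KCS.lft n S.h q (ii p) + KCS.len n S.h)) → x ∈ Set.Icc (0 : Fin n → ℝ) 1 →
        |(∑ p : Fin n, KCS.psi n hn1 p q (x p)) - ∑ p : Fin n, S.v q p (ii p)|
          ≤ n * S.bud := by
      intro ii x hx1 hx2
      have hterm : ∀ p : Fin n, |KCS.psi n hn1 p q (x p) - S.v q p (ii p)| ≤ S.bud := by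
        intro p
        have hfc : S.f q p (x p) = S.v q p (ii p) :=
          S.fconst q p (ii p) (ii p).isLt (x p) (hx1 p)
        rw [← hfc]
        exact KCS.psi_partial n hn1 q p j ⟨hx2.1 p, hx2.2 p⟩
      calc |(∑ p : Fin n, KCS.psi n hn1 p q (x p)) - ∑ p : Fin n, S.v q p (ii p)|
          = |∑ p : Fin n, (KCS.psi n hn1 p q (x p) - S.v q p (ii p))| := by
            rw [Finset.sum_sub_distrib]
        _ ≤ ∑ p : Fin n, |KCS.psi n hn1 p q (x p) - S.v q p (ii p)| :=
            Finset.abs_sum_le_sum_abs _ _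
        _ ≤ ∑ _p : Fin n, S.bud := Finset.sum_le_sum (fun p _ => hterm p)
        _ = n * S.bud := by rw [Finset.sum_const, Finset.card_univ, Fintype.card_fin]; ring
    have hvsep : S.eta ≤ |(∑ p : Fin n, S.v q p ((i p : ℕ)))
        - ∑ p : Fin n, S.v q p ((i' p : ℕ))| := by
      apply S.vsep q (fun p => (i p : ℕ)) (fun p => (i' p : ℕ))
        (fun p => (i p).isLt) (fun p => (i' p).isLt)
      intro hcon
      apply hne
      funext p
      exact Fin.val_injective (congrFun hcon p)
    rw [Set.disjoint_left]
    rintro y ⟨x, ⟨hx1, hx2⟩, hxy⟩ ⟨x', ⟨hx1', hx2'⟩, hxy'⟩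
    have hx1b : ∀ p, x p ∈ Set.Icc (KCS.lft n S.h q (i p))
        (KCS.lft n S.h q (i p) + KCS.len n S.h) := hx1
    have hx1b' : ∀ p, x' p ∈ Set.Icc (KCS.lft n S.h q (i' p))
        (KCS.lft n S.h q (i' p) + KCS.len n S.h) := hx1'
    have hxy2 : (∑ p : Fin n, KCS.psi n hn1 p q (x p)) = y := hxy
    have hxy2' : (∑ p : Fin n, KCS.psi n hn1 p q (x' p)) = y := hxy'
    have hk1 := key i x hx1b hx2
    have hk2 := key i' x' hx1b' hx2'
    rw [hxy2] at hk1
    rw [hxy2'] at hk2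
    have htri : |(∑ p : Fin n, S.v q p ((i p : ℕ))) - ∑ p : Fin n, S.v q p ((i' p : ℕ))|
        ≤ 2 * (n * S.bud) := by
      have h1 := abs_sub_abs_le_abs_sub y (∑ p : Fin n, S.v q p ((i p : ℕ)))
      calc |(∑ p : Fin n, S.v q p ((i p : ℕ))) - ∑ p : Fin n, S.v q p ((i' p : ℕ))|
          ≤ |(∑ p : Fin n, S.v q p ((i p : ℕ))) - y|
            + |y - ∑ p : Fin n, S.v q p ((i' p : ℕ))| := abs_sub_le _ y _
        _ ≤ 2 * (n * S.bud) := by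
            rw [abs_sub_comm] at hk1
            linarith [hk1, hk2]
    have hbud := S.budeta
    have hetapos := S.etapos
    have hbudpos := S.budpos
    have hcast : (1:ℝ) ≤ (n:ℝ) := by exact_mod_cast hn1
    have hfrac : (n:ℝ) * S.bud ≤ (n:ℝ) * (S.eta / (8*((n:ℝ)+1))) := by
      apply mul_le_mul_of_nonneg_left hbud (by positivity)
    have hlt : (n:ℝ) * (S.eta / (8*((n:ℝ)+1))) < S.eta / 4 := by
      have h8 : (0:ℝ) < 8*((n:ℝ)+1) := by positivity
      have hkey : (n:ℝ) / (8*((n:ℝ)+1)) < 1/4 := by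
        rw [div_lt_div_iff₀ h8 (by norm_num)]
        nlinarith
      calc (n:ℝ) * (S.eta / (8*((n:ℝ)+1))) = ((n:ℝ)/(8*((n:ℝ)+1))) * S.eta := by ring
        _ < (1/4)*S.eta := mul_lt_mul_of_pos_right hkey hetapos
        _ = S.eta/4 := by ring
    nlinarith [htri, hvsep, hfrac, hlt]
end

section
/- Let n ≥ 2 and ε ∈ (0, 1/(2n)]. For each j ∈ ℕ let 𝒯_j be a finite set of pairwise disjoint closed intervals contained in [−1,1], and for q ∈ {0,…,2n} let 𝒯^q_j = { t + qε : t ∈ 𝒯_j } (translated intervals). Let 𝒮^q_j be the set of all n-fold Cartesian products of intervals from 𝒯^q_j. Let λ_1, …, λ_n be real numbers that are linearly independent over the rationals, let ψ : [−1, 1+2nε] → ℝ be continuous, and define Ψ^q(x_1,…,x_n) = Σ_{p=1}^n λ_p ψ(x_p + qε). Assume: (1) for each q and j, distinct cubes of 𝒮^q_j are disjoint; (2) for every x ∈ [0,1]^n and every j, there exist at least n+1 values of q ∈ {0,…,2n} such that x lies in some cube of 𝒮^q_j; (3) the supremum of cube diameters over 𝒮^q_j tends to 0 as j → ∞, for every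 q; (4) for each q and j, distinct cubes S_1 ≠ S_2 in 𝒮^q_j satisfy Ψ^q(S_1) ∩ Ψ^q(S_2) = ∅, i.e., the images under Ψ^q of distinct cubes are disjoint. Then every continuous function f : [0,1]^n → ℝ admits a representation f(x) = Σ_{q=0}^{2n} χ^q( Ψ^q(x) ) for all x ∈ [0,1]^n, for some continuous functions χ^0, …, χ^{2n} : ℝ → ℝ. -/
open Metric Set

private lemma kst_pair_sep {K L : Set ℝ} (hK : IsCompact K) (hKne : K.Nonempty)
    (hL : IsCompact L) (hdisj : Disjoint K L) :
    ∃ ρ > 0, ∀ x ∈ K, ∀ y ∈ L, ρ ≤ dist x y := by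
  rcases L.eq_empty_or_nonempty with hLe | hLne
  · exact ⟨1, one_pos, fun x _ y hy => by simp [hLe] at hy⟩
  obtain ⟨x0, hx0, hmin⟩ := hK.exists_isMinOn hKne (continuous_infDist_pt L).continuousOn
  refine ⟨infDist x0 L, ?_, ?_⟩
  · exact (hL.isClosed.notMem_iff_infDist_pos hLne).mp
      (disjoint_left.mp hdisj hx0)
  · intro x hx y hy
    exact le_trans (hmin hx) (infDist_le_dist_of_mem hy)

private lemma kst_family_sep {ι : Type*} [Fintype ι] (K : ι → Set ℝ)
    (hKc : ∀ i, IsCompact (K i)) (hKne : ∀ i, (K i).Nonempty)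
    (hdisj : ∀ i j, i ≠ j → Disjoint (K i) (K j)) :
    ∃ ρ > 0, ∀ i j, i ≠ j → ∀ x ∈ K i, ∀ y ∈ K j, ρ ≤ dist x y := by
  have h : ∀ p : ι × ι, ∃ ρ, 0 < ρ ∧ (p.1 ≠ p.2 → ∀ x ∈ K p.1, ∀ y ∈ K p.2, ρ ≤ dist x y) := by
    intro p
    by_cases hp : p.1 = p.2
    · exact ⟨1, one_pos, fun h => absurd hp h⟩
    · obtain ⟨ρ, hρ, hs⟩ := kst_pair_sep (hKc p.1) (hKne p.1) (hKc p.2) (hdisj _ _ hp)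
      exact ⟨ρ, hρ, fun _ => hs⟩
  choose ρf hρf hsepf using h
  rcases isEmpty_or_nonempty ι with hι | hι
  · exact ⟨1, one_pos, fun i => (IsEmpty.false i).elim⟩
  · have hne : (Finset.univ : Finset (ι × ι)).Nonempty := Finset.univ_nonempty
    refine ⟨Finset.univ.inf' hne ρf, ?_, ?_⟩
    · exact (Finset.lt_inf'_iff hne).mpr fun p _ => hρf p
    · intro i j hij x hx y hy
      exact le_trans (Finset.inf'_le ρf (Finset.mem_univ (i, j))) (hsepf (i, j) hij x hx y hy)

private lemma kst_glue {ι : Type*} [Fintype ι] (K : ι → Set ℝ)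
    (hKc : ∀ i, IsCompact (K i)) (hKne : ∀ i, (K i).Nonempty)
    (hdisj : ∀ i j, i ≠ j → Disjoint (K i) (K j))
    (v : ι → ℝ) (M : ℝ) (hM : 0 ≤ M) (hv : ∀ i, |v i| ≤ M) :
    ∃ χ : ℝ → ℝ, Continuous χ ∧ (∀ i, ∀ y ∈ K i, χ y = v i) ∧ (∀ y, |χ y| ≤ M) := by
  obtain ⟨ρ, hρ, hsep⟩ := kst_family_sep K hKc hKne hdisj
  set b : ι → ℝ → ℝ := fun i y => max 0 (1 - infDist y (K i) / (ρ / 2)) with hb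
  have hb01 : ∀ i y, 0 ≤ b i y ∧ b i y ≤ 1 := by
    intro i y
    refine ⟨le_max_left _ _, max_le (by norm_num) ?_⟩
    have : 0 ≤ infDist y (K i) / (ρ / 2) :=
      div_nonneg infDist_nonneg (by linarith)
    linarith
  have hbmem : ∀ i y, y ∈ K i → b i y = 1 := by
    intro i y hy
    simp [hb, infDist_zero_of_mem hy]
  have hbnear : ∀ i y, b i y ≠ 0 → ∃ z ∈ K i, dist y z < ρ / 2 := by
    intro i y hby
    have h1 : infDist y (K i) < ρ / 2 := by
      by_contra hc
      push_neg at hc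
      have : 1 - infDist y (K i) / (ρ / 2) ≤ 0 := by
        have : (1:ℝ) ≤ infDist y (K i) / (ρ / 2) := (one_le_div (by linarith)).mpr hc
        linarith
      exact hby (max_eq_left this)
    exact (infDist_lt_iff (hKne i)).mp h1
  have huniq : ∀ y i j, i ≠ j → b i y ≠ 0 → b j y ≠ 0 → False := by
    intro y i j hij hbi hbj
    obtain ⟨z, hz, hz'⟩ := hbnear i y hbi
    obtain ⟨w, hw, hw'⟩ := hbnear j y hbj
    have := hsep i j hij z hz w hw
    have : dist z w ≤ dist z y + dist y w := dist_triangle _ _ _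
    rw [dist_comm z y] at this
    linarith [hsep i j hij z hz w hw]
  refine ⟨fun y => ∑ i, v i * b i y, ?_, ?_, ?_⟩
  · refine continuous_finset_sum _ fun i _ => ?_
    exact continuous_const.mul
      (continuous_const.max ((continuous_const.sub
        ((continuous_infDist_pt (K i)).div_const _))))
  · intro i y hy
    show (∑ j, v j * b j y) = v i
    rw [Finset.sum_eq_single_of_mem i (Finset.mem_univ i)]
    · rw [hbmem i y hy]; ring
    · intro j _ hji
      rcases eq_or_ne (b j y) 0 with h0 | h0
      · rw [h0]; ring
      · exact absurd (huniq y j i hji h0 (by rw [hbmem i y hy]; norm_num)) (fun h => h)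
  · intro y
    show |∑ i, v i * b i y| ≤ M
    by_cases hall : ∀ i, v i * b i y = 0
    · simp only [Finset.sum_congr rfl (fun i _ => hall i), Finset.sum_const_zero]
      simpa using hM
    · push_neg at hall
      obtain ⟨i0, hi0⟩ := hall
      have hbi0 : b i0 y ≠ 0 := fun h => hi0 (by rw [h]; ring)
      rw [Finset.sum_eq_single_of_mem i0 (Finset.mem_univ i0)]
      · calc |v i0 * b i0 y| = |v i0| * |b i0 y| := abs_mul _ _
          _ ≤ M * 1 := by
              apply mul_le_mul (hv i0) _ (abs_nonneg _) hM
              rw [abs_of_nonneg (hb01 i0 y).1]; exact (hb01 i0 y).2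
          _ = M := mul_one M
      · intro j _ hji
        rcases eq_or_ne (b j y) 0 with h0 | h0
        · rw [h0]; ring
        · exact absurd (huniq y j i0 hji h0 hbi0) (fun h => h)

private lemma kst_core (n : ℕ) (hn : 2 ≤ n)
    (Ψ : Fin (2 * n + 1) → (Fin n → ℝ) → ℝ)
    (cube : Fin (2 * n + 1) → (Fin n → Set ℝ) → Set (Fin n → ℝ))
    (T : ℕ → Set (Set ℝ)) (hTfin : ∀ j, (T j).Finite)
    (hcube_closed : ∀ j q (t : Fin n → Set ℝ), (∀ p, t p ∈ T j) → IsClosed (cube q t))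
    (hcube_bdd : ∀ j q (t : Fin n → Set ℝ), (∀ p, t p ∈ T j) →
      Bornology.IsBounded (cube q t))
    (hΨcont : ∀ q, ContinuousOn (Ψ q) (Set.Icc (0 : Fin n → ℝ) 1))
    (hcover : ∀ x ∈ Set.Icc (0 : Fin n → ℝ) 1, ∀ j : ℕ,
      n + 1 ≤ {q : Fin (2 * n + 1) | ∃ t : Fin n → Set ℝ,
        (∀ p, t p ∈ T j) ∧ x ∈ cube q t}.ncard)
    (hdiam : ∀ q : Fin (2 * n + 1), ∀ δ : ℝ, 0 < δ → ∃ J : ℕ, ∀ j ≥ J,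
      ∀ t : Fin n → Set ℝ, (∀ p, t p ∈ T j) → Metric.diam (cube q t) ≤ δ)
    (hsep : ∀ j : ℕ, ∀ q : Fin (2 * n + 1), ∀ t t' : Fin n → Set ℝ,
      (∀ p, t p ∈ T j) → (∀ p, t' p ∈ T j) → t ≠ t' →
      Disjoint (Ψ q '' cube q t) (Ψ q '' cube q t'))
    (f : (Fin n → ℝ) → ℝ) (hf : ContinuousOn f (Set.Icc 0 1)) :
    ∃ χ : Fin (2 * n + 1) → ℝ → ℝ,
      (∀ q, Continuous (χ q)) ∧
      (∀ x ∈ Set.Icc (0 : Fin n → ℝ) 1, f x = ∑ q : Fin (2 * n + 1), χ q (Ψ q x)) := by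
  classical
  set A : ℝ := (n : ℝ) + 1 with hA
  have hA0 : (0:ℝ) < A := by positivity
  set θ : ℝ := (2 * (n:ℝ) + 1) / (2 * (n:ℝ) + 2) with hθ
  have hθ0 : 0 ≤ θ := by positivity
  have hθ1 : θ < 1 := by
    rw [hθ, div_lt_one (by positivity)]; linarith
  -- the one-step approximation lemma
  have key : ∀ (g : (Fin n → ℝ) → ℝ) (M : ℝ), ContinuousOn g (Set.Icc 0 1) → 0 ≤ M →
      (∀ x ∈ Set.Icc (0 : Fin n → ℝ) 1, |g x| ≤ M) →
      ∃ χ : Fin (2 * n + 1) → ℝ → ℝ, (∀ q, Continuous (χ q)) ∧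
        (∀ q y, |χ q y| ≤ M / A) ∧
        (∀ x ∈ Set.Icc (0 : Fin n → ℝ) 1, |g x - ∑ q, χ q (Ψ q x)| ≤ θ * M) := by
    intro g M hg hM hgM
    rcases eq_or_lt_of_le hM with hM0 | hM0
    · refine ⟨fun _ _ => 0, fun _ => continuous_const, ?_, ?_⟩
      · intro q y; simp; positivity
      · intro x hx
        simp only [Finset.sum_const_zero, sub_zero]
        calc |g x| ≤ M := hgM x hx
          _ = θ * M := by rw [← hM0]; ring
    -- M > 0 case
    set μ : ℝ := M / (2 * (2 * (n:ℝ) + 1)) with hμdef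
    have hμ : 0 < μ := by positivity
    -- uniform continuity
    have hUC := (isCompact_Icc (a := (0 : Fin n → ℝ)) (b := 1)).uniformContinuousOn_of_continuous hg
    rw [Metric.uniformContinuousOn_iff] at hUC
    obtain ⟨δ, hδ, hδg⟩ := hUC μ hμ
    -- choose j
    have hJq : ∀ q : Fin (2 * n + 1), ∃ J : ℕ, ∀ j ≥ J, ∀ t : Fin n → Set ℝ,
        (∀ p, t p ∈ T j) → Metric.diam (cube q t) ≤ δ / 2 :=
      fun q => hdiam q (δ / 2) (by linarith)
    choose Jf hJf using hJq
    set j : ℕ := Finset.univ.sup Jf with hj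
    have hdiamj : ∀ q (t : Fin n → Set ℝ), (∀ p, t p ∈ T j) →
        Metric.diam (cube q t) ≤ δ / 2 :=
      fun q t ht => hJf q j (Finset.le_sup (Finset.mem_univ q)) t ht
    -- per-q construction
    have hq : ∀ q : Fin (2 * n + 1), ∃ χq : ℝ → ℝ, Continuous χq ∧
        (∀ y, |χq y| ≤ M / A) ∧
        (∀ t : Fin n → Set ℝ, (∀ p, t p ∈ T j) →
          ∀ x0 ∈ cube q t ∩ Set.Icc 0 1, ∃ xs ∈ cube q t ∩ Set.Icc 0 1,
            χq (Ψ q x0) = g xs / A) := by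
      intro q
      set R : Set (Fin n → Set ℝ) :=
        {t | (∀ p, t p ∈ T j) ∧ (cube q t ∩ Set.Icc 0 1).Nonempty} with hR
      have hRfin : R.Finite := by
        refine (Set.Finite.pi (fun _ : Fin n => hTfin j)).subset ?_
        intro t ht
        rw [Set.mem_univ_pi]
        exact ht.1
      haveI : Fintype R := hRfin.fintype
      have hxsel : ∀ t : R, ∃ x, x ∈ cube q t.1 ∩ Set.Icc 0 1 := fun t => t.2.2
      choose xsel hxselm using hxsel
      set K : R → Set ℝ := fun t => Ψ q '' (cube q t.1 ∩ Set.Icc 0 1) with hK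
      have hKc : ∀ t : R, IsCompact (K t) := by
        intro t
        exact ((isCompact_Icc.inter_left (hcube_closed j q t.1 t.2.1)).image_of_continuousOn
          ((hΨcont q).mono inter_subset_right))
      have hKne : ∀ t : R, (K t).Nonempty := fun t => (t.2.2).image _
      have hKdisj : ∀ t t' : R, t ≠ t' → Disjoint (K t) (K t') := by
        intro t t' htt'
        have h1 : t.1 ≠ t'.1 := fun h => htt' (Subtype.ext h)
        exact Disjoint.mono (image_mono inter_subset_left)
          (image_mono inter_subset_left) (hsep j q t.1 t'.1 t.2.1 t'.2.1 h1)
      set v : R → ℝ := fun t => g (xsel t) / A with hv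
      have hvb : ∀ t : R, |v t| ≤ M / A := by
        intro t
        rw [hv, abs_div, abs_of_pos hA0]
        gcongr
        exact hgM _ (hxselm t).2
      obtain ⟨χq, hχqc, hχqval, hχqb⟩ :=
        kst_glue K hKc hKne hKdisj v (M / A) (by positivity) hvb
      refine ⟨χq, hχqc, hχqb, ?_⟩
      intro t ht x0 hx0
      have htR : t ∈ R := ⟨ht, ⟨x0, hx0⟩⟩
      refine ⟨xsel ⟨t, htR⟩, hxselm ⟨t, htR⟩, ?_⟩
      have hmem : Ψ q x0 ∈ K ⟨t, htR⟩ := mem_image_of_mem _ hx0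
      rw [hχqval ⟨t, htR⟩ _ hmem]
    choose χ hχc hχb hχval using hq
    refine ⟨χ, hχc, hχb, ?_⟩
    intro x hx
    set Qs : Finset (Fin (2 * n + 1)) :=
      Finset.univ.filter (fun q => ∃ t : Fin n → Set ℝ,
        (∀ p, t p ∈ T j) ∧ x ∈ cube q t) with hQs
    have hQscard : (n : ℝ) + 1 ≤ (Qs.card : ℝ) := by
      have h1 := hcover x hx j
      have h2 : {q : Fin (2 * n + 1) | ∃ t : Fin n → Set ℝ,
          (∀ p, t p ∈ T j) ∧ x ∈ cube q t}.ncard = Qs.card := by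
        rw [Set.ncard_eq_toFinset_card']
        congr 1
        ext q
        simp [hQs]
      rw [h2] at h1
      exact_mod_cast h1
    have hQscard' : (Qs.card : ℝ) ≤ 2 * (n:ℝ) + 1 := by
      have h3 : Qs.card ≤ 2 * n + 1 := le_trans (Finset.card_le_univ Qs) (by simp)
      exact_mod_cast h3
    -- value on covered q's
    have hval : ∀ q ∈ Qs, |χ q (Ψ q x) - g x / A| ≤ μ / A := by
      intro q hqm
      rw [hQs, Finset.mem_filter] at hqm
      obtain ⟨-, t, ht, hxt⟩ := hqm
      obtain ⟨xs, hxs, hχeq⟩ := hχval q t ht x ⟨hxt, hx⟩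
      rw [hχeq, div_sub_div_same, abs_div, abs_of_pos hA0]
      gcongr
      have hdist : dist x xs ≤ δ / 2 :=
        le_trans (dist_le_diam_of_mem (hcube_bdd j q t ht) hxt hxs.1) (hdiamj q t ht)
      have := hδg x hx xs hxs.2 (by linarith)
      rw [Real.dist_eq] at this
      rw [abs_sub_comm]
      linarith
    -- the splitting
    have hsplit : ∑ q, χ q (Ψ q x) =
        (∑ q ∈ Qs, χ q (Ψ q x)) + ∑ q ∈ Qsᶜ, χ q (Ψ q x) :=
      (Finset.sum_add_sum_compl Qs _).symm
    have e1 : |(∑ q ∈ Qs, χ q (Ψ q x)) - (Qs.card : ℝ) * (g x / A)| ≤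
        (Qs.card : ℝ) * (μ / A) := by
      have h1 : (∑ q ∈ Qs, χ q (Ψ q x)) - (Qs.card : ℝ) * (g x / A) =
          ∑ q ∈ Qs, (χ q (Ψ q x) - g x / A) := by
        rw [Finset.sum_sub_distrib, Finset.sum_const, nsmul_eq_mul]
      rw [h1]
      calc |∑ q ∈ Qs, (χ q (Ψ q x) - g x / A)| ≤ ∑ q ∈ Qs, |χ q (Ψ q x) - g x / A| :=
            Finset.abs_sum_le_sum_abs _ _
        _ ≤ Qs.card • (μ / A) := Finset.sum_le_card_nsmul _ _ _ (fun q hqm => hval q hqm)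
        _ = (Qs.card : ℝ) * (μ / A) := nsmul_eq_mul _ _
    have e2 : |∑ q ∈ Qsᶜ, χ q (Ψ q x)| ≤ (2 * (n:ℝ) + 1 - Qs.card) * (M / A) := by
      calc |∑ q ∈ Qsᶜ, χ q (Ψ q x)| ≤ ∑ q ∈ Qsᶜ, |χ q (Ψ q x)| :=
            Finset.abs_sum_le_sum_abs _ _
        _ ≤ Qsᶜ.card • (M / A) := Finset.sum_le_card_nsmul _ _ _ (fun q _ => hχb q _)
        _ = (Qsᶜ.card : ℝ) * (M / A) := nsmul_eq_mul _ _
        _ = (2 * (n:ℝ) + 1 - Qs.card) * (M / A) := by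
            rw [Finset.card_compl]
            have hle : Qs.card ≤ 2 * n + 1 := by exact_mod_cast hQscard'
            have : ((Fintype.card (Fin (2 * n + 1)) - Qs.card : ℕ) : ℝ)
                = 2 * (n:ℝ) + 1 - Qs.card := by
              rw [Fintype.card_fin, Nat.cast_sub hle]
              push_cast
              ring
            rw [this]
    have e3 : |g x - (Qs.card : ℝ) * (g x / A)| ≤ ((Qs.card : ℝ) - A) / A * M := by
      have h1 : g x - (Qs.card : ℝ) * (g x / A) = -(((Qs.card : ℝ) - A) / A * g x) := by
        field_simp
        ring
      rw [h1, abs_neg, abs_mul]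
      have h2 : 0 ≤ ((Qs.card : ℝ) - A) / A := by
        apply div_nonneg _ hA0.le
        rw [hA]; linarith
      rw [abs_of_nonneg h2]
      exact mul_le_mul_of_nonneg_left (hgM x hx) h2
    -- assemble
    have hfinal : |g x - ∑ q, χ q (Ψ q x)| ≤
        ((Qs.card : ℝ) - A) / A * M + (Qs.card : ℝ) * (μ / A)
          + (2 * (n:ℝ) + 1 - Qs.card) * (M / A) := by
      rw [hsplit]
      have : g x - ((∑ q ∈ Qs, χ q (Ψ q x)) + ∑ q ∈ Qsᶜ, χ q (Ψ q x)) =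
          (g x - (Qs.card : ℝ) * (g x / A))
          - ((∑ q ∈ Qs, χ q (Ψ q x)) - (Qs.card : ℝ) * (g x / A))
          - ∑ q ∈ Qsᶜ, χ q (Ψ q x) := by ring
      rw [this]
      calc |_ - _ - _| ≤ |_ - _| + |∑ q ∈ Qsᶜ, χ q (Ψ q x)| := abs_sub _ _
        _ ≤ _ := by
            gcongr
            calc |_ - _| ≤ |g x - (Qs.card : ℝ) * (g x / A)|
                + |(∑ q ∈ Qs, χ q (Ψ q x)) - (Qs.card : ℝ) * (g x / A)| := abs_sub _ _
              _ ≤ _ := add_le_add e3 e1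
    refine le_trans hfinal ?_
    -- final arithmetic
    set m : ℝ := (Qs.card : ℝ) with hm
    have h1 : A ≤ m := by rw [hA]; exact hQscard
    have h2 : m ≤ 2 * (n:ℝ) + 1 := hQscard'
    have h2n1 : (0:ℝ) < 2 * (n:ℝ) + 1 := by positivity
    have hmm : m * μ ≤ M / 2 := by
      have ha : m * μ ≤ (2 * (n:ℝ) + 1) * μ := mul_le_mul_of_nonneg_right h2 hμ.le
      have hb : (2 * (n:ℝ) + 1) * μ = M / 2 := by
        rw [hμdef]; field_simp
      linarith
    have hnum : (m - A) * M + m * μ + (2 * (n:ℝ) + 1 - m) * M ≤ (2 * (n:ℝ) + 1) / 2 * M := by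
      have hrw : (m - A) * M + m * μ + (2 * (n:ℝ) + 1 - m) * M = (n:ℝ) * M + m * μ := by
        rw [hA]; ring
      rw [hrw]; linarith
    have hLHS : (m - A) / A * M + m * (μ / A) + (2 * (n:ℝ) + 1 - m) * (M / A)
        = ((m - A) * M + m * μ + (2 * (n:ℝ) + 1 - m) * M) / A := by
      field_simp
    have hRHS : θ * M = ((2 * (n:ℝ) + 1) / 2 * M) / A := by
      rw [hθ, hA]; field_simp
    rw [hLHS, hRHS]
    gcongr
  -- bound for f
  obtain ⟨C, hC⟩ := isCompact_Icc.exists_bound_of_continuousOn hf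
  set M : ℝ := max C 0 with hM
  have hM0 : 0 ≤ M := le_max_right _ _
  have hfM : ∀ x ∈ Set.Icc (0 : Fin n → ℝ) 1, |f x| ≤ M := fun x hx =>
    le_trans (by simpa [Real.norm_eq_abs] using hC x hx) (le_max_left _ _)
  -- a total step function via choice
  have hstep : ∀ gM : ((Fin n → ℝ) → ℝ) × ℝ, ∃ χs : Fin (2 * n + 1) → ℝ → ℝ,
      (ContinuousOn gM.1 (Set.Icc 0 1) ∧ 0 ≤ gM.2 ∧
        ∀ x ∈ Set.Icc (0 : Fin n → ℝ) 1, |gM.1 x| ≤ gM.2) →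
      ((∀ q, Continuous (χs q)) ∧ (∀ q y, |χs q y| ≤ gM.2 / A) ∧
        ∀ x ∈ Set.Icc (0 : Fin n → ℝ) 1, |gM.1 x - ∑ q, χs q (Ψ q x)| ≤ θ * gM.2) := by
    intro gM
    by_cases h : ContinuousOn gM.1 (Set.Icc 0 1) ∧ 0 ≤ gM.2 ∧
        ∀ x ∈ Set.Icc (0 : Fin n → ℝ) 1, |gM.1 x| ≤ gM.2
    · obtain ⟨χs, h1, h2, h3⟩ := key gM.1 gM.2 h.1 h.2.1 h.2.2
      exact ⟨χs, fun _ => ⟨h1, h2, h3⟩⟩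
    · exact ⟨fun _ _ => 0, fun h' => absurd h' h⟩
  choose Xf hXf using hstep
  set F : (((Fin n → ℝ) → ℝ) × ℝ) → (((Fin n → ℝ) → ℝ) × ℝ) :=
    fun gM => (fun x => gM.1 x - ∑ q, Xf gM q (Ψ q x), θ * gM.2) with hF
  set G : ℕ → (((Fin n → ℝ) → ℝ) × ℝ) := fun k => F^[k] (f, M) with hG
  have hG0 : G 0 = (f, M) := rfl
  have hGsucc : ∀ k, G (k + 1) = F (G k) := fun k => Function.iterate_succ_apply' F k _
  have hInv : ∀ k, ContinuousOn (G k).1 (Set.Icc 0 1) ∧ (G k).2 = θ ^ k * M ∧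
      ∀ x ∈ Set.Icc (0 : Fin n → ℝ) 1, |(G k).1 x| ≤ (G k).2 := by
    intro k
    induction k with
    | zero => exact ⟨hf, by simp [hG0], by simpa [hG0] using hfM⟩
    | succ k ih =>
      have hgood := hXf (G k) ⟨ih.1, by rw [ih.2.1]; positivity, ih.2.2⟩
      refine ⟨?_, ?_, ?_⟩
      · rw [hGsucc k]
        refine ContinuousOn.sub ih.1 ?_
        refine continuousOn_finset_sum _ fun q _ => ?_
        exact (hgood.1 q).comp_continuousOn (hΨcont q)
      · rw [hGsucc k]
        show θ * (G k).2 = θ ^ (k + 1) * M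
        rw [ih.2.1, pow_succ]; ring
      · intro x hx
        rw [hGsucc k]
        show |(G k).1 x - ∑ q, Xf (G k) q (Ψ q x)| ≤ θ * (G k).2
        exact hgood.2.2 x hx
  set Xk : ℕ → Fin (2 * n + 1) → ℝ → ℝ := fun k => Xf (G k) with hXk
  have hgoodk : ∀ k, (∀ q, Continuous (Xk k q)) ∧
      (∀ q y, |Xk k q y| ≤ θ ^ k * (M / A)) ∧
      (∀ x ∈ Set.Icc (0 : Fin n → ℝ) 1,
        |(G k).1 x - ∑ q, Xk k q (Ψ q x)| ≤ θ * (θ ^ k * M)) := by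
    intro k
    have h := hXf (G k) ⟨(hInv k).1, by rw [(hInv k).2.1]; positivity, (hInv k).2.2⟩
    refine ⟨h.1, fun q y => ?_, fun x hx => ?_⟩
    · have := h.2.1 q y
      rw [(hInv k).2.1] at this
      calc |Xk k q y| ≤ θ ^ k * M / A := this
        _ = θ ^ k * (M / A) := by ring
    · have := h.2.2 x hx
      rwa [(hInv k).2.1] at this
  set u : ℕ → ℝ := fun k => θ ^ k * (M / A) with hu
  have husum : Summable u := (summable_geometric_of_lt_one hθ0 hθ1).mul_right (M / A)
  refine ⟨fun q y => ∑' k, Xk k q y, ?_, ?_⟩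
  · intro q
    refine continuous_tsum (fun k => (hgoodk k).1 q) husum ?_
    intro k y
    rw [Real.norm_eq_abs]
    exact (hgoodk k).2.1 q y
  · intro x hx
    set a : ℕ → ℝ := fun k => (G k).1 x with ha
    have ha0 : a 0 = f x := rfl
    have habd : ∀ k, |a k| ≤ θ ^ k * M := by
      intro k
      have := (hInv k).2.2 x hx
      rwa [(hInv k).2.1] at this
    have ha_tel : ∀ k, ∑ q, Xk k q (Ψ q x) = a k - a (k + 1) := by
      intro k
      have h1 : a (k + 1) = a k - ∑ q, Xk k q (Ψ q x) := by
        show (G (k + 1)).1 x = _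
        rw [hGsucc k]
      rw [h1]; ring
    have hsummq : ∀ q, Summable (fun k => Xk k q (Ψ q x)) := by
      intro q
      refine Summable.of_norm_bounded husum ?_
      intro k
      rw [Real.norm_eq_abs]
      exact (hgoodk k).2.1 q _
    have hMθ : Summable (fun k : ℕ => 2 * M * θ ^ k) :=
      (summable_geometric_of_lt_one hθ0 hθ1).mul_left (2 * M)
    have hnormsum : Summable (fun k => ‖a k - a (k + 1)‖) := by
      refine Summable.of_nonneg_of_le (fun k => norm_nonneg _) ?_ hMθ
      intro k
      rw [Real.norm_eq_abs]
      have h1 := habd k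
      have h2 := habd (k + 1)
      have h3 : θ ^ (k + 1) * M ≤ θ ^ k * M := by
        rw [pow_succ]
        have : θ ^ k * θ ≤ θ ^ k * 1 :=
          mul_le_mul_of_nonneg_left hθ1.le (pow_nonneg hθ0 k)
        nlinarith
      calc |a k - a (k + 1)| ≤ |a k| + |a (k + 1)| := abs_sub _ _
        _ ≤ θ ^ k * M + θ ^ k * M := by linarith
        _ = 2 * M * θ ^ k := by ring
    have haN0 : Filter.Tendsto a Filter.atTop (nhds 0) := by
      refine squeeze_zero_norm (a := fun k => M * θ ^ k) (fun k => ?_) ?_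
      · rw [Real.norm_eq_abs]
        calc |a k| ≤ θ ^ k * M := habd k
          _ = M * θ ^ k := by ring
      · have := (tendsto_pow_atTop_nhds_zero_of_lt_one hθ0 hθ1).const_mul M
        simpa using this
    have htel : HasSum (fun k => a k - a (k + 1)) (a 0) := by
      rw [hasSum_iff_tendsto_nat_of_summable_norm hnormsum]
      have heq : (fun N => ∑ k ∈ Finset.range N, (a k - a (k + 1))) =
          fun N => a 0 - a N := by
        funext N
        exact Finset.sum_range_sub' a N
      rw [heq]
      have := Filter.Tendsto.sub (tendsto_const_nhds (x := a 0)) haN0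
      simpa using this
    calc f x = a 0 := rfl
      _ = ∑' k, (a k - a (k + 1)) := htel.tsum_eq.symm
      _ = ∑' k, ∑ q, Xk k q (Ψ q x) := tsum_congr fun k => (ha_tel k).symm
      _ = ∑ q, ∑' k, Xk k q (Ψ q x) := Summable.tsum_finsetSum fun q _ => hsummq q


/-- Lemma 5.1 of the paper (sufficiency criterion for a KST representation in Sprecher
form): given towns `𝒯_j` of pairwise disjoint closed intervals in `[-1,1]`, their
translates by `qε`, rationally independent coefficients `λ_p`, and a continuous
`ψ : [-1, 1+2nε] → ℝ`, if the induced product cubes are pairwise disjoint, cover every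
point of `[0,1]^n` for at least `n+1` shifts, have diameters tending to `0`, and
`Ψ^q(x) = ∑_p λ_p ψ(x_p + qε)` maps distinct cubes to disjoint sets, then every
continuous `f : [0,1]^n → ℝ` equals `∑_q χ^q ∘ Ψ^q` for suitable continuous `χ^q`. -/
theorem kst_sufficiency_criterion (n : ℕ) (hn : 2 ≤ n)
    (ε : ℝ) (hε : 0 < ε) (hε' : ε ≤ 1 / (2 * n))
    (T : ℕ → Set (Set ℝ))
    (hTfin : ∀ j, (T j).Finite)
    (hTint : ∀ j, ∀ t ∈ T j, ∃ a b : ℝ, a ≤ b ∧ t = Set.Icc a b ∧ t ⊆ Set.Icc (-1) 1)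
    (hTdisj : ∀ j, (T j).Pairwise Disjoint)
    (lam : Fin n → ℝ)
    (hlam : ∀ c : Fin n → ℚ, ∑ p : Fin n, (c p : ℝ) * lam p = 0 → c = 0)
    (ψ : ℝ → ℝ) (hψ : ContinuousOn ψ (Set.Icc (-1) (1 + 2 * n * ε)))
    (hcube_disj : ∀ j : ℕ, ∀ q : Fin (2 * n + 1), ∀ t t' : Fin n → Set ℝ,
      (∀ p, t p ∈ T j) → (∀ p, t' p ∈ T j) → t ≠ t' →
      Disjoint {x : Fin n → ℝ | ∀ p, x p - ((q : ℕ) : ℝ) * ε ∈ t p}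
        {x : Fin n → ℝ | ∀ p, x p - ((q : ℕ) : ℝ) * ε ∈ t' p})
    (hcover : ∀ x ∈ Set.Icc (0 : Fin n → ℝ) 1, ∀ j : ℕ,
      n + 1 ≤ {q : Fin (2 * n + 1) | ∃ t : Fin n → Set ℝ,
        (∀ p, t p ∈ T j) ∧ ∀ p, x p - ((q : ℕ) : ℝ) * ε ∈ t p}.ncard)
    (hdiam : ∀ q : Fin (2 * n + 1), ∀ δ : ℝ, 0 < δ → ∃ J : ℕ, ∀ j ≥ J,
      ∀ t : Fin n → Set ℝ, (∀ p, t p ∈ T j) →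
        Metric.diam {x : Fin n → ℝ | ∀ p, x p - ((q : ℕ) : ℝ) * ε ∈ t p} ≤ δ)
    (hsep : ∀ j : ℕ, ∀ q : Fin (2 * n + 1), ∀ t t' : Fin n → Set ℝ,
      (∀ p, t p ∈ T j) → (∀ p, t' p ∈ T j) → t ≠ t' →
      Disjoint
        ((fun x : Fin n → ℝ => ∑ p : Fin n, lam p * ψ (x p + ((q : ℕ) : ℝ) * ε)) ''
          {x : Fin n → ℝ | ∀ p, x p - ((q : ℕ) : ℝ) * ε ∈ t p})
        ((fun x : Fin n → ℝ => ∑ p : Fin n, lam p * ψ (x p + ((q : ℕ) : ℝ) * ε)) ''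
          {x : Fin n → ℝ | ∀ p, x p - ((q : ℕ) : ℝ) * ε ∈ t' p}))
    (f : (Fin n → ℝ) → ℝ) (hf : ContinuousOn f (Set.Icc 0 1)) :
    ∃ χ : Fin (2 * n + 1) → ℝ → ℝ,
      (∀ q, Continuous (χ q)) ∧
      (∀ x ∈ Set.Icc (0 : Fin n → ℝ) 1,
        f x = ∑ q : Fin (2 * n + 1),
          χ q (∑ p : Fin n, lam p * ψ (x p + ((q : ℕ) : ℝ) * ε))) := by
  classical
  have hn0 : (0:ℝ) < (n:ℝ) := by
    have : 0 < n := by omega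
    exact_mod_cast this
  have hq2n : ∀ q : Fin (2 * n + 1), ((q:ℕ):ℝ) ≤ 2 * (n:ℝ) := by
    intro q
    have := Nat.lt_succ_iff.mp q.isLt
    exact_mod_cast this
  have hqε : ∀ q : Fin (2 * n + 1), 0 ≤ ((q:ℕ):ℝ) * ε ∧ ((q:ℕ):ℝ) * ε ≤ 1 := by
    intro q
    constructor
    · positivity
    · calc ((q:ℕ):ℝ) * ε ≤ 2 * (n:ℝ) * ε := mul_le_mul_of_nonneg_right (hq2n q) hε.le
        _ ≤ 2 * (n:ℝ) * (1 / (2 * n)) := mul_le_mul_of_nonneg_left hε' (by positivity)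
        _ = 1 := by field_simp
  obtain ⟨χ, h1, h2⟩ := kst_core n hn
    (fun q x => ∑ p : Fin n, lam p * ψ (x p + ((q : ℕ) : ℝ) * ε))
    (fun q t => {x : Fin n → ℝ | ∀ p, x p - ((q : ℕ) : ℝ) * ε ∈ t p})
    T hTfin
    (by -- closed
      intro j q t ht
      show IsClosed {x : Fin n → ℝ | ∀ p, x p - ((q:ℕ):ℝ) * ε ∈ t p}
      have hEq : {x : Fin n → ℝ | ∀ p, x p - ((q:ℕ):ℝ) * ε ∈ t p} =
          ⋂ p, (fun x : Fin n → ℝ => x p - ((q:ℕ):ℝ) * ε) ⁻¹' (t p) := by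
        ext x; simp [Set.mem_iInter]
      rw [hEq]
      refine isClosed_iInter fun p => ?_
      obtain ⟨a, b, hab, htp, hsub⟩ := hTint j (t p) (ht p)
      have hcl : IsClosed (t p) := htp ▸ isClosed_Icc
      exact hcl.preimage ((continuous_apply p).sub continuous_const)
    )
    (by -- bounded
      intro j q t ht
      rw [Metric.isBounded_iff]
      refine ⟨3, fun x hx y hy => ?_⟩
      have hx' : ∀ p, x p - ((q:ℕ):ℝ) * ε ∈ t p := hx
      have hy' : ∀ p, y p - ((q:ℕ):ℝ) * ε ∈ t p := hy
      rw [dist_pi_le_iff (by norm_num : (0:ℝ) ≤ 3)]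
      intro p
      obtain ⟨a, b, hab, htp, hsub⟩ := hTint j (t p) (ht p)
      have h1 := hsub (hx' p)
      have h2 := hsub (hy' p)
      rw [Set.mem_Icc] at h1 h2
      rw [Real.dist_eq,
        show x p - y p = (x p - ((q:ℕ):ℝ) * ε) - (y p - ((q:ℕ):ℝ) * ε) from by ring, abs_le]
      constructor <;> linarith [h1.1, h1.2, h2.1, h2.2]
    )
    (by -- Ψ continuous
      intro q
      refine continuousOn_finset_sum _ fun p _ => ?_
      refine ContinuousOn.mul continuousOn_const ?_
      refine hψ.comp ((continuous_apply p).add continuous_const).continuousOn ?_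
      intro x hx
      have h0 : (0:ℝ) ≤ x p := hx.1 p
      have h1 : x p ≤ 1 := hx.2 p
      have h2 := (hqε q).1
      have h3 : ((q:ℕ):ℝ) * ε ≤ 2 * (n:ℝ) * ε := mul_le_mul_of_nonneg_right (hq2n q) hε.le
      simp only [Set.mem_Icc]
      constructor
      · show (-1:ℝ) ≤ x p + ((q:ℕ):ℝ) * ε
        linarith
      · show x p + ((q:ℕ):ℝ) * ε ≤ 1 + 2 * (n:ℝ) * ε
        linarith
    )
    hcover hdiam hsep f hf
  exact ⟨χ, h1, h2⟩
end

section
/- Let ν ≥ 1 be an integer and let m̂ ∈ ℝ with m̂ ≠ 0. Define the linear map T : ℝ^{2ν} → ℝ^{2ν} on coordinates (a_1, b_1, a_2, b_2, …, a_ν, b_ν) by: the first ν+1 output coordinates are m̂·a_1, m̂·(a_2 − b_1), m̂·(a_3 − b_2), …, m̂·(a_ν − b_{ν−1}), −m̂·b_ν, and the remaining ν−1 output coordinates are b_1 + a_2, b_2 + a_3, …, b_{ν−1} + a_ν. Then T is bijective; equivalently, the associated 2ν × 2ν matrix C is invertible, so for every right-hand side z ∈ ℝ^{2ν} the linear system Cx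 = z has a unique solution. -/
/-!
Pair the unknowns with the equations: `a₁` appears alone in the first slope equation and `b_ν`
alone in the last one, while for `1 ≤ i < ν` the unknowns `(a_{i+1}, b_i)` appear only in the
`i`-th inner slope equation and the `i`-th symmetry equation, through the block
`(x, y) ↦ (m̂ (x - y), y + x)` of determinant `2 m̂`. Solving each block separately gives an
explicit two-sided inverse.
-/

namespace PlugSystem

variable {K : Type*} [Field K] {n : ℕ}

/-- The plug system for `ν = n + 1` plugs. -/
def plugMap (m : K) (ab : (Fin (n + 1) → K) × (Fin (n + 1) → K)) :
    K × (Fin n → K) × K × (Fin n → K) :=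
  (m * ab.1 0,
   fun j => m * (ab.1 j.succ - ab.2 j.castSucc),
   -m * ab.2 (Fin.last n),
   fun j => ab.2 j.castSucc + ab.1 j.succ)

def plugSolve (m : K) (z : K × (Fin n → K) × K × (Fin n → K)) :
    (Fin (n + 1) → K) × (Fin (n + 1) → K) :=
  (Fin.cons (z.1 / m) fun j => (z.2.2.2 j + z.2.1 j / m) / 2,
   Fin.snoc (fun j => (z.2.2.2 j - z.2.1 j / m) / 2) (-(z.2.2.1 / m)))

variable [NeZero (2 : K)] {m : K}

theorem plugSolve_leftInverse (hm : m ≠ 0) :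
    Function.LeftInverse (plugSolve m) (plugMap (n := n) m) := by
  rintro ⟨a, b⟩
  refine Prod.ext (funext fun i => ?_) (funext fun i => ?_)
  · induction i using Fin.cases with
    | zero => simp [plugSolve, plugMap, hm]
    | succ j =>
      simp only [plugSolve, plugMap, Fin.cons_succ]
      field_simp
      ring
  · induction i using Fin.lastCases with
    | last => simp [plugSolve, plugMap, hm, neg_div]
    | cast j =>
      simp only [plugSolve, plugMap, Fin.snoc_castSucc]
      field_simp
      ring

theorem plugSolve_rightInverse (hm : m ≠ 0) :
    Function.RightInverse (plugSolve m) (plugMap (n := n) m) := by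
  rintro ⟨s₀, s, s₁, t⟩
  simp only [plugMap, plugSolve, Fin.cons_zero, Fin.cons_succ, Fin.snoc_castSucc, Fin.snoc_last]
  refine Prod.ext ?_ (Prod.ext (funext fun j => ?_) (Prod.ext ?_ (funext fun j => ?_))) <;>
    field_simp <;> ring

theorem plugMap_bijective (hm : m ≠ 0) : Function.Bijective (plugMap (n := n) m) :=
  Function.bijective_iff_has_inverse.2
    ⟨plugSolve m, plugSolve_leftInverse hm, plugSolve_rightInverse hm⟩

end PlugSystem

/-- Invertibility of the linear system in the "plugs" stage of the algorithm: for
`ν ≥ 1` and `m̂ ≠ 0`, the linear map sending `(a₁,b₁,…,a_ν,b_ν)` to the `ν+1` slope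
quantities `m̂a₁, m̂(a₂-b₁), …, m̂(a_ν-b_{ν-1}), -m̂b_ν` together with the `ν-1`
symmetry quantities `b₁+a₂, …, b_{ν-1}+a_ν` is bijective, so the associated
`2ν × 2ν` system has a unique solution for every right-hand side. -/
theorem plug_system_invertible (ν : ℕ) (hν : 1 ≤ ν) (mhat : ℝ) (hm : mhat ≠ 0) :
    Function.Bijective (fun ab : (Fin ν → ℝ) × (Fin ν → ℝ) =>
      ((mhat * ab.1 ⟨0, hν⟩,
        fun i : Fin (ν - 1) =>
          mhat * (ab.1 ⟨i.val + 1, by have := i.isLt; omega⟩ -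
            ab.2 ⟨i.val, by have := i.isLt; omega⟩),
        -mhat * ab.2 ⟨ν - 1, by omega⟩,
        fun i : Fin (ν - 1) =>
          ab.2 ⟨i.val, by have := i.isLt; omega⟩ +
            ab.1 ⟨i.val + 1, by have := i.isLt; omega⟩) :
        ℝ × (Fin (ν - 1) → ℝ) × ℝ × (Fin (ν - 1) → ℝ))) := by
  obtain ⟨n, rfl⟩ := Nat.exists_eq_add_of_le' hν
  -- `n + 1 - 1` reduces to `n`, so the map is `plugMap mhat` up to definitional unfolding.
  exact PlugSystem.plugMap_bijective hm
end
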